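/- arXiv:0803.3414 — 11 statements merged into one kernel-verified Lean document; each statement's English description precedes it below -/
import Mathlib

section
/- The formal power series f satisfying f = 1 + x·f + (2^(d-1) − 1)·x·f² with f(0) = 1 is the generating function for the numbers a_d(n+1) of separable d-permutations of [n+1], i.e. the coefficient of x^n in f equals a_d(n+1). -/
/-- `P` is a `d`-permutation: a sequence of `d` permutations of `[n]`
whose first entry is the identity. -/
def IsDPerm {d n : ℕ} (P : Fin d → Equiv.Perm (Fin n)) : Prop :=
  ∀ h : 0 < d, P ⟨0, h⟩ = 1

/-- Separability of the restriction of the `d` rows `P` to the block of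
columns `[a, b)`: either the block consists of a single column, or it can be
split into two consecutive sub-blocks such that in each row all entries of one
sub-block are smaller than all entries of the other, and both sub-blocks are
themselves separable. -/
inductive SepOn {d : ℕ} (P : Fin d → ℕ → ℕ) : ℕ → ℕ → Prop
  | single (a : ℕ) : SepOn P a (a + 1)
  | split (a l b : ℕ) (h1 : a < l) (h2 : l < b)
      (hmono : ∀ i : Fin d,
        (∀ j1 j2, a ≤ j1 → j1 < l → l ≤ j2 → j2 < b → P i j1 < P i j2) ∨
        (∀ j1 j2, a ≤ j1 → j1 < l → l ≤ j2 → j2 < b → P i j2 < P i j1))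
      (hL : SepOn P a l) (hR : SepOn P l b) : SepOn P a b

/-- The rows of a `d`-permutation, as functions `ℕ → ℕ`. -/
def dPermRows {d n : ℕ} (P : Fin d → Equiv.Perm (Fin n)) : Fin d → ℕ → ℕ :=
  fun i j => if h : j < n then (P i ⟨j, h⟩ : ℕ) else 0

/-- A `d`-permutation of `[n]` is separable if its full block of columns is
recursively separable. -/
def IsSepDPerm {d n : ℕ} (P : Fin d → Equiv.Perm (Fin n)) : Prop :=
  SepOn (dPermRows P) 0 n

/-!
A separable `d`-permutation with at least two columns has a first cut, and all its cuts have the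
same orientation `ε ∈ {↑, ↓}^d`, with `ε 0 = ↑` because row `0` is the identity. Cutting at the
first cut is a bijection onto the triples `(ε, A, B)` with `B` any separable `d`-permutation and
`A` a separable `d`-permutation without a cut of orientation `ε`. A one-column `A` allows all
`2^(d-1)` orientations, a larger one all but its own, so
`a(n+2) = a(n+1) + (2^(d-1) - 1) ∑_{i+j=n} a(i+1) a(j+1)`, which is the recursion for the
coefficients of `f` read off from its functional equation.
-/

open Equiv Finset

variable {d : ℕ}

def IsCut (P : Fin d → ℕ → ℕ) (a l b : ℕ) : Prop :=
  ∀ i : Fin d,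
    (∀ j₁ j₂, a ≤ j₁ → j₁ < l → l ≤ j₂ → j₂ < b → P i j₁ < P i j₂) ∨
    (∀ j₁ j₂, a ≤ j₁ → j₁ < l → l ≤ j₂ → j₂ < b → P i j₂ < P i j₁)

def IsDirectedCut (P : Fin d → ℕ → ℕ) (ε : Fin d → Bool) (a l b : ℕ) : Prop :=
  ∀ i j₁ j₂, a ≤ j₁ → j₁ < l → l ≤ j₂ → j₂ < b →
    if ε i then P i j₁ < P i j₂ else P i j₂ < P i j₁

section Cuts

variable {P : Fin d → ℕ → ℕ} {ε ε' : Fin d → Bool} {a l b : ℕ}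

theorem IsCut.mono {a' b' : ℕ} (h : IsCut P a l b) (ha : a ≤ a') (hb : b' ≤ b) :
    IsCut P a' l b' := fun i =>
  (h i).imp (fun hi j₁ j₂ h₁ h₂ h₃ h₄ => hi j₁ j₂ (ha.trans h₁) h₂ h₃ (h₄.trans_le hb))
    (fun hi j₁ j₂ h₁ h₂ h₃ h₄ => hi j₁ j₂ (ha.trans h₁) h₂ h₃ (h₄.trans_le hb))

theorem IsDirectedCut.mono {a' b' : ℕ} (h : IsDirectedCut P ε a l b) (ha : a ≤ a') (hb : b' ≤ b) :
    IsDirectedCut P ε a' l b' := fun i j₁ j₂ h₁ h₂ h₃ h₄ =>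
  h i j₁ j₂ (ha.trans h₁) h₂ h₃ (h₄.trans_le hb)

theorem IsDirectedCut.of_forall_lt_iff {Q : Fin d → ℕ → ℕ} (h : IsDirectedCut P ε a l b)
    (hPQ : ∀ i j₁ j₂, a ≤ j₁ → j₁ < b → a ≤ j₂ → j₂ < b → (P i j₁ < P i j₂ ↔ Q i j₁ < Q i j₂)) :
    IsDirectedCut Q ε a l b := by
  intro i j₁ j₂ h₁ h₂ h₃ h₄
  have := h i j₁ j₂ h₁ h₂ h₃ h₄
  split_ifs at this ⊢
  · exact (hPQ i j₁ j₂ h₁ (by omega) (by omega) h₄).mp this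
  · exact (hPQ i j₂ j₁ (by omega) h₄ h₁ (by omega)).mp this

theorem IsDirectedCut.extend {c : ℕ} (hl : IsDirectedCut P ε a l c) (hc : IsDirectedCut P ε a c b)
    (hlc : l ≤ c) : IsDirectedCut P ε a l b := by
  intro i j₁ j₂ h₁ h₂ h₃ h₄
  rcases lt_or_ge j₂ c with hj | hj
  · exact hl i j₁ j₂ h₁ h₂ h₃ hj
  · exact hc i j₁ j₂ h₁ (by omega) hj h₄

theorem IsDirectedCut.isCut (h : IsDirectedCut P ε a l b) : IsCut P a l b := by
  intro i
  cases hi : ε i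
  · exact Or.inr fun j₁ j₂ h₁ h₂ h₃ h₄ => by simpa [hi] using h i j₁ j₂ h₁ h₂ h₃ h₄
  · exact Or.inl fun j₁ j₂ h₁ h₂ h₃ h₄ => by simpa [hi] using h i j₁ j₂ h₁ h₂ h₃ h₄

theorem IsCut.isDirectedCut (h : IsCut P a l b) (hal : a < l) (hlb : l < b) :
    IsDirectedCut P (fun i => decide (P i a < P i l)) a l b := by
  intro i j₁ j₂ h₁ h₂ h₃ h₄
  rcases h i with hi | hi
  · simpa [hi a l le_rfl hal le_rfl hlb] using hi j₁ j₂ h₁ h₂ h₃ h₄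
  · simpa [(hi a l le_rfl hal le_rfl hlb).le.not_gt] using hi j₁ j₂ h₁ h₂ h₃ h₄

/-- Compare the first column with the first column after the later cut. -/
theorem IsDirectedCut.dir_eq {l' : ℕ} (h : IsDirectedCut P ε a l b)
    (h' : IsDirectedCut P ε' a l' b) (hal : a < l) (hal' : a < l') (hlb : l < b)
    (hlb' : l' < b) : ε = ε' := by
  wlog hll : l ≤ l' generalizing l l' ε ε'
  · exact (this h' h hal' hal hlb' hlb (by omega)).symm
  funext i
  have t := h i a l' le_rfl hal hll hlb'
  have t' := h' i a l' le_rfl hal' le_rfl hlb'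
  cases hi : ε i <;> cases hi' : ε' i <;> simp [hi, hi'] at t t' ⊢ <;> omega

end Cuts

namespace SepOn

variable {P Q : Fin d → ℕ → ℕ} {a b : ℕ}

theorem exists_isCut (h : SepOn P a b) (hab : a + 1 < b) :
    ∃ l, a < l ∧ l < b ∧ IsCut P a l b := by
  cases h with
  | single => omega
  | split _ l _ h₁ h₂ hmono => exact ⟨l, h₁, h₂, hmono⟩

theorem of_forall_lt_iff {a' n : ℕ} (hP : SepOn P a (a + n))
    (h : ∀ i j₁ j₂, j₁ < n → j₂ < n →
      (P i (a + j₁) < P i (a + j₂) ↔ Q i (a' + j₁) < Q i (a' + j₂))) :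
    SepOn Q a' (a' + n) := by
  generalize hb : a + n = b at hP
  induction hP generalizing a' n with
  | single c =>
    obtain rfl : n = 1 := by omega
    exact .single a'
  | split c l e h₁ h₂ hmono _ _ ihL ihR =>
    subst hb
    have hL := ihL (a' := a') (n := l - c) (fun i j₁ j₂ u₁ u₂ => h i j₁ j₂ (by omega) (by omega))
      (by omega)
    have hR := ihR (a' := a' + (l - c)) (n := c + n - l) (fun i j₁ j₂ u₁ u₂ => by
      simpa only [← Nat.add_assoc, Nat.add_sub_cancel' h₁.le] using
        h i (l - c + j₁) (l - c + j₂) (by omega) (by omega)) (by omega)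
    rw [show a' + (l - c) + (c + n - l) = a' + n by omega] at hR
    refine .split a' (a' + (l - c)) (a' + n) (by omega) (by omega) (fun i => ?_) hL hR
    have transfer : ∀ j₁ j₂, a' ≤ j₁ → j₁ < a' + n → a' ≤ j₂ → j₂ < a' + n →
        (P i (c + (j₁ - a')) < P i (c + (j₂ - a')) ↔ Q i j₁ < Q i j₂) := fun j₁ j₂ u₁ u₂ u₃ u₄ => by
      simpa [Nat.add_sub_cancel' u₁, Nat.add_sub_cancel' u₃] using
        h i (j₁ - a') (j₂ - a') (by omega) (by omega)
    rcases hmono i with hm | hm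
    · exact .inl fun j₁ j₂ u₁ u₂ u₃ u₄ => (transfer j₁ j₂ u₁ (by omega) (by omega) u₄).mp
        (hm _ _ (by omega) (by omega) (by omega) (by omega))
    · exact .inr fun j₁ j₂ u₁ u₂ u₃ u₄ => (transfer j₂ j₁ (by omega) u₄ u₁ (by omega)).mp
        (hm _ _ (by omega) (by omega) (by omega) (by omega))

theorem exists_first_isCut (h : SepOn P a b) (hab : a + 1 < b) :
    ∃ l, a < l ∧ l < b ∧ IsCut P a l b ∧ ∀ l', a < l' → l' < l → ¬ IsCut P a l' b := by
  classical
  have hex := h.exists_isCut hab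
  obtain ⟨hal, hlb, hcut⟩ := Nat.find_spec hex
  exact ⟨Nat.find hex, hal, hlb, hcut, fun l' hal' hl' hcut' =>
    Nat.find_min hex hl' ⟨hal', hl'.trans hlb, hcut'⟩⟩

theorem iff_of_forall_lt_iff {a' n : ℕ}
    (h : ∀ i j₁ j₂, j₁ < n → j₂ < n →
      (P i (a + j₁) < P i (a + j₂) ↔ Q i (a' + j₁) < Q i (a' + j₂))) :
    SepOn P a (a + n) ↔ SepOn Q a' (a' + n) :=
  ⟨fun hP => hP.of_forall_lt_iff h,
    fun hQ => hQ.of_forall_lt_iff fun i j₁ j₂ h₁ h₂ => (h i j₁ j₂ h₁ h₂).symm⟩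

theorem of_isCut (h : SepOn P a b) {c : ℕ} (hac : a < c) (hcb : c < b) (hcut : IsCut P a c b) :
    SepOn P a c ∧ SepOn P c b := by
  induction h with
  | single => omega
  | split a l b h₁ h₂ hmono hL hR ihL ihR =>
    rcases lt_trichotomy c l with hcl | rfl | hlc
    · obtain ⟨hac', hcl'⟩ := ihL hac hcl (hcut.mono le_rfl h₂.le)
      exact ⟨hac', .split c l b hcl h₂ (IsCut.mono hmono hac.le le_rfl) hcl' hR⟩
    · exact ⟨hL, hR⟩
    · obtain ⟨hlc', hcb'⟩ := ihR hlc hcb (hcut.mono h₁.le le_rfl)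
      exact ⟨.split a l c h₁ hlc (IsCut.mono hmono le_rfl hcb.le) hL hlc', hcb'⟩

end SepOn

/-- In row `i`, `P` is the direct sum (`ε i = true`) or the skew sum (`ε i = false`) of `A` and
`B`. -/
structure IsBlockSum (P A B : Fin d → ℕ → ℕ) (ε : Fin d → Bool) (s r : ℕ) : Prop where
  left : ∀ i j, j < s → P i j = A i j + if ε i then 0 else r
  right : ∀ i j, j < r → P i (s + j) = B i j + if ε i then s else 0
  left_lt : ∀ i j, j < s → A i j < s
  right_lt : ∀ i j, j < r → B i j < r

namespace IsBlockSum

variable {P A B : Fin d → ℕ → ℕ} {ε : Fin d → Bool} {s r : ℕ}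

theorem lt_iff_left (h : IsBlockSum P A B ε s r) (i : Fin d) {j₁ j₂ : ℕ} (h₁ : j₁ < s)
    (h₂ : j₂ < s) : P i j₁ < P i j₂ ↔ A i j₁ < A i j₂ := by
  rw [h.left i j₁ h₁, h.left i j₂ h₂, Nat.add_lt_add_iff_right]

theorem lt_iff_right (h : IsBlockSum P A B ε s r) (i : Fin d) {j₁ j₂ : ℕ} (h₁ : j₁ < r)
    (h₂ : j₂ < r) : P i (s + j₁) < P i (s + j₂) ↔ B i j₁ < B i j₂ := by
  rw [h.right i j₁ h₁, h.right i j₂ h₂, Nat.add_lt_add_iff_right]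

theorem isDirectedCut (h : IsBlockSum P A B ε s r) : IsDirectedCut P ε 0 s (s + r) := by
  intro i j₁ j₂ _ h₁ h₂ h₃
  have e₁ := h.left i j₁ h₁
  have e₂ := h.right i (j₂ - s) (by omega)
  have b₁ := h.left_lt i j₁ h₁
  have b₂ := h.right_lt i (j₂ - s) (by omega)
  rw [Nat.add_sub_cancel' h₂] at e₂
  cases hi : ε i <;> simp only [hi, Bool.false_eq_true, ↓reduceIte] at e₁ e₂ ⊢ <;> omega

theorem sepOn_left_iff (h : IsBlockSum P A B ε s r) : SepOn P 0 s ↔ SepOn A 0 s := by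
  simpa using SepOn.iff_of_forall_lt_iff (a := 0) (a' := 0) (n := s)
    fun i j₁ j₂ h₁ h₂ => by simpa using h.lt_iff_left i h₁ h₂

theorem sepOn_right_iff (h : IsBlockSum P A B ε s r) : SepOn P s (s + r) ↔ SepOn B 0 r := by
  simpa using SepOn.iff_of_forall_lt_iff (a' := 0) fun i j₁ j₂ h₁ h₂ => by
    simpa using h.lt_iff_right i h₁ h₂

theorem isCut_iff (h : IsBlockSum P A B ε s r) (hr : 0 < r) {l : ℕ} (hl : 0 < l) (hls : l < s) :
    IsCut P 0 l (s + r) ↔ IsDirectedCut A ε 0 l s := by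
  have hPA : ∀ i j₁ j₂, 0 ≤ j₁ → j₁ < s → 0 ≤ j₂ → j₂ < s → (P i j₁ < P i j₂ ↔ A i j₁ < A i j₂) :=
    fun i _ _ _ h₁ _ h₂ => h.lt_iff_left i h₁ h₂
  constructor
  · intro hcut
    have hdir := hcut.isDirectedCut hl (by omega)
    rw [hdir.dir_eq h.isDirectedCut hl (hl.trans hls) (by omega) (by omega)] at hdir
    exact (hdir.mono le_rfl (by omega)).of_forall_lt_iff hPA
  · intro hA
    exact ((hA.of_forall_lt_iff fun i j₁ j₂ h₁ h₂ h₃ h₄ => (hPA i j₁ j₂ h₁ h₂ h₃ h₄).symm).extend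
      h.isDirectedCut hls.le).isCut

theorem le_of_isCut (h : IsBlockSum P A B ε s r) (hr : 0 < r)
    (hA : ¬ ∃ l, 0 < l ∧ l < s ∧ IsDirectedCut A ε 0 l s) {l : ℕ} (hl : 0 < l)
    (hcut : IsCut P 0 l (s + r)) : s ≤ l := by
  by_contra hls
  exact hA ⟨l, hl, by omega, (h.isCut_iff hr hl (by omega)).mp hcut⟩

end IsBlockSum

section Window

variable {f : ℕ → ℕ} {m s : ℕ}

theorem lt_of_forall_lt_of_injOn (hf : Set.InjOn f (Set.Iio m)) (hfm : ∀ j < m, f j < m)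
    (hsm : s ≤ m) (hcut : ∀ j₁ j₂, j₁ < s → s ≤ j₂ → j₂ < m → f j₁ < f j₂) :
    (∀ j < s, f j < s) ∧ ∀ j, s ≤ j → j < m → s ≤ f j := by
  constructor
  · intro j hj
    have : #(Ico s m) ≤ #(Ioo (f j) m) := card_le_card_of_injOn f
      (fun y hy => by
        rw [coe_Ico, Set.mem_Ico] at hy
        exact mem_Ioo.mpr ⟨hcut j y hj hy.1 hy.2, hfm y hy.2⟩)
      (hf.mono fun y hy => (mem_Ico.mp hy).2)
    simp only [Nat.card_Ico, Nat.card_Ioo] at this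
    have := hfm j (by omega)
    omega
  · intro j hj hjm
    have : #(range s) ≤ #(range (f j)) := card_le_card_of_injOn f
      (fun y hy => mem_range.mpr (hcut y j (mem_range.mp hy) hj hjm))
      (hf.mono fun y hy => (mem_range.mp hy).trans_le (by omega))
    simpa using this

theorem le_of_forall_gt_of_injOn (hf : Set.InjOn f (Set.Iio m)) (hfm : ∀ j < m, f j < m)
    (hsm : s ≤ m) (hcut : ∀ j₁ j₂, j₁ < s → s ≤ j₂ → j₂ < m → f j₂ < f j₁) :
    (∀ j < s, m - s ≤ f j) ∧ ∀ j, s ≤ j → j < m → f j < m - s := by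
  have hf' : Set.InjOn (fun j => m - 1 - f j) (Set.Iio m) := fun x hx y hy hxy => by
    have := hfm x hx; have := hfm y hy
    exact hf hx hy (by simp only at hxy; omega)
  obtain ⟨hlow, hhigh⟩ := lt_of_forall_lt_of_injOn hf' (fun j hj => by omega) hsm
    (fun j₁ j₂ h₁ h₂ h₃ => by have := hcut j₁ j₂ h₁ h₂ h₃; have := hfm j₁ (by omega); omega)
  exact ⟨fun j hj => by have := hlow j hj; have := hfm j (by omega); omega,
    fun j hj hjm => by have := hhigh j hj hjm; have := hfm j hjm; omega⟩

theorem exists_perm_of_injOn {c v : ℕ} (hf : Set.InjOn f (Set.Ico c (c + s)))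
    (hv : ∀ j < s, v ≤ f (c + j) ∧ f (c + j) < v + s) :
    ∃ τ : Perm (Fin s), ∀ j (hj : j < s), f (c + j) = τ ⟨j, hj⟩ + v := by
  let g : Fin s → Fin s := fun j => ⟨f (c + j) - v, by have := hv j j.isLt; omega⟩
  have hg : Function.Injective g := fun x y hxy => by
    have hx := hv x x.isLt
    have hy := hv y y.isLt
    have := hf (x₁ := c + x) (x₂ := c + y) (by simp) (by simp) (by
      simp only [g, Fin.mk.injEq] at hxy; omega)
    exact Fin.ext (by omega)
  exact ⟨Equiv.ofBijective g (Finite.injective_iff_bijective.mp hg), fun j hj => by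
    have := hv j hj
    simp only [Equiv.ofBijective_apply, g]
    omega⟩

end Window

theorem dPermRows_of_lt {n : ℕ} (P : Fin d → Perm (Fin n)) (i : Fin d) {j : ℕ} (hj : j < n) :
    dPermRows P i j = P i ⟨j, hj⟩ := dif_pos hj

theorem dPermRows_lt {n : ℕ} (P : Fin d → Perm (Fin n)) (i : Fin d) {j : ℕ} (hj : j < n) :
    dPermRows P i j < n := by
  rw [dPermRows_of_lt P i hj]; exact Fin.isLt _

theorem dPermRows_injOn {n : ℕ} (P : Fin d → Perm (Fin n)) (i : Fin d) :
    Set.InjOn (dPermRows P i) (Set.Iio n) := fun x hx y hy hxy => by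
  rw [dPermRows_of_lt P i hx, dPermRows_of_lt P i hy] at hxy
  exact Fin.mk.inj_iff.mp ((P i).injective (Fin.ext hxy))

theorem dPermRows_ext {n : ℕ} {P Q : Fin d → Perm (Fin n)}
    (h : ∀ i j, j < n → dPermRows P i j = dPermRows Q i j) : P = Q := by
  funext i
  ext j
  simpa [dPermRows_of_lt _ _ j.isLt] using h i j j.isLt

theorem isDPerm_iff_dPermRows {n : ℕ} (P : Fin d → Perm (Fin n)) :
    IsDPerm P ↔ ∀ h : 0 < d, ∀ j < n, dPermRows P ⟨0, h⟩ j = j := by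
  refine forall_congr' fun h => ⟨fun hP j hj => by simp [dPermRows_of_lt _ _ hj, hP], fun hP => ?_⟩
  ext j
  simpa [dPermRows_of_lt _ _ j.isLt] using hP j j.isLt

/-- Row `0` of a `d`-permutation is the identity, so its cuts are increasing there. -/
theorem IsDirectedCut.apply_zero {m s : ℕ} {P : Fin d → Perm (Fin m)} {ε : Fin d → Bool}
    (h : IsDirectedCut (dPermRows P) ε 0 s m) (hP : IsDPerm P) (hs : 0 < s) (hsm : s < m)
    (hd : 0 < d) : ε ⟨0, hd⟩ = true := by
  have hrow := (isDPerm_iff_dPermRows P).mp hP hd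
  have := h ⟨0, hd⟩ 0 s le_rfl hs le_rfl hsm
  rw [hrow 0 (by omega), hrow s hsm] at this
  by_contra hε
  simp [hε] at this

def finSumFinEquivOrdered {k r : ℕ} (b : Bool) : Fin k ⊕ Fin r ≃ Fin (k + r) :=
  if b then finSumFinEquiv else (sumComm _ _).trans (finSumFinEquiv.trans (finCongr (add_comm r k)))

namespace Equiv.Perm

variable {k r : ℕ}

def blockSum (b : Bool) (σ : Perm (Fin k)) (τ : Perm (Fin r)) : Perm (Fin (k + r)) :=
  finSumFinEquiv.symm.trans ((σ.sumCongr τ).trans (finSumFinEquivOrdered b))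

theorem blockSum_castAdd (b : Bool) (σ : Perm (Fin k)) (τ : Perm (Fin r)) (j : Fin k) :
    (blockSum b σ τ (Fin.castAdd r j) : ℕ) = σ j + if b then 0 else r := by
  cases b <;> simp [blockSum, finSumFinEquivOrdered, add_comm]

theorem blockSum_natAdd (b : Bool) (σ : Perm (Fin k)) (τ : Perm (Fin r)) (j : Fin r) :
    (blockSum b σ τ (Fin.natAdd k j) : ℕ) = τ j + if b then k else 0 := by
  cases b <;> simp [blockSum, finSumFinEquivOrdered, add_comm]

end Equiv.Perm

section Glue

variable {k r m : ℕ}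

def glue (hm : k + r = m) (ε : Fin d → Bool) (A : Fin d → Perm (Fin k))
    (B : Fin d → Perm (Fin r)) : Fin d → Perm (Fin m) :=
  fun i => (finCongr hm).permCongr (Perm.blockSum (ε i) (A i) (B i))

theorem isBlockSum_glue (hm : k + r = m) (ε : Fin d → Bool) (A : Fin d → Perm (Fin k))
    (B : Fin d → Perm (Fin r)) :
    IsBlockSum (dPermRows (glue hm ε A B)) (dPermRows A) (dPermRows B) ε k r where
  left i j hj := by
    rw [dPermRows_of_lt _ i (by omega), dPermRows_of_lt _ i hj,
      ← Perm.blockSum_castAdd (ε i) (A i) (B i)]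
    rfl
  right i j hj := by
    rw [dPermRows_of_lt _ i (by omega), dPermRows_of_lt _ i hj,
      ← Perm.blockSum_natAdd (ε i) (A i) (B i)]
    rfl
  left_lt i _ := dPermRows_lt A i
  right_lt i _ := dPermRows_lt B i

theorem isSepDPerm_glue (hm : k + r = m) (ε : Fin d → Bool) {A : Fin d → Perm (Fin k)}
    {B : Fin d → Perm (Fin r)} (hk : 0 < k) (hr : 0 < r) (hA : IsSepDPerm A)
    (hB : IsSepDPerm B) : IsSepDPerm (glue hm ε A B) := by
  subst hm
  have h := isBlockSum_glue rfl ε A B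
  exact .split 0 k (k + r) hk (by omega) h.isDirectedCut.isCut (h.sepOn_left_iff.mpr hA)
    (h.sepOn_right_iff.mpr hB)

end Glue

theorem IsDirectedCut.dPermRows_mem_window {s r : ℕ} {P : Fin d → Perm (Fin (s + r))}
    {ε : Fin d → Bool} (h : IsDirectedCut (dPermRows P) ε 0 s (s + r)) (i : Fin d) :
    (∀ j < s, (if ε i then 0 else r) ≤ dPermRows P i (0 + j) ∧
        dPermRows P i (0 + j) < (if ε i then 0 else r) + s) ∧
      ∀ j < r, (if ε i then s else 0) ≤ dPermRows P i (s + j) ∧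
        dPermRows P i (s + j) < (if ε i then s else 0) + r := by
  have hlt : ∀ j < s + r, dPermRows P i j < s + r := fun j => dPermRows_lt P i
  have hcut := fun j₁ j₂ h₁ h₂ h₃ => h i j₁ j₂ (Nat.zero_le _) h₁ h₂ h₃
  cases hi : ε i <;> simp only [hi, Bool.false_eq_true, ↓reduceIte] at hcut ⊢
  · obtain ⟨hl, hr⟩ := le_of_forall_gt_of_injOn (dPermRows_injOn P i) hlt (by omega) hcut
    refine ⟨fun j hj => ⟨?_, ?_⟩, fun j hj => ⟨Nat.zero_le _, ?_⟩⟩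
    · simpa using hl j hj
    · simpa [add_comm] using hlt j (by omega)
    · simpa using hr (s + j) (by omega) (by omega)
  · obtain ⟨hl, hr⟩ := lt_of_forall_lt_of_injOn (dPermRows_injOn P i) hlt (by omega) hcut
    refine ⟨fun j hj => ⟨Nat.zero_le _, ?_⟩, fun j hj => ⟨?_, ?_⟩⟩
    · simpa using hl j hj
    · exact hr (s + j) (by omega) (by omega)
    · exact hlt (s + j) (by omega)

theorem exists_isBlockSum {s r m : ℕ} (hm : s + r = m) {P : Fin d → Perm (Fin m)}
    {ε : Fin d → Bool} (h : IsDirectedCut (dPermRows P) ε 0 s m) :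
    ∃ (A : Fin d → Perm (Fin s)) (B : Fin d → Perm (Fin r)),
      IsBlockSum (dPermRows P) (dPermRows A) (dPermRows B) ε s r := by
  subst hm
  choose A hA using fun i => exists_perm_of_injOn
    ((dPermRows_injOn P i).mono fun j hj => by simp at hj ⊢; omega)
    (h.dPermRows_mem_window i).1
  choose B hB using fun i => exists_perm_of_injOn
    ((dPermRows_injOn P i).mono fun j hj => by simp at hj ⊢; omega)
    (h.dPermRows_mem_window i).2
  refine ⟨A, B, ⟨fun i j hj => ?_, fun i j hj => ?_, fun i _ => dPermRows_lt A i,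
    fun i _ => dPermRows_lt B i⟩⟩
  · simpa [dPermRows_of_lt A i hj] using hA i j hj
  · simpa [dPermRows_of_lt B i hj] using hB i j hj

namespace IsBlockSum

variable {s r m : ℕ} {P : Fin d → Perm (Fin m)} {A : Fin d → Perm (Fin s)}
  {B : Fin d → Perm (Fin r)} {ε : Fin d → Bool}

theorem isDPerm_iff (h : IsBlockSum (dPermRows P) (dPermRows A) (dPermRows B) ε s r)
    (hm : s + r = m) (hε : ∀ hd : 0 < d, ε ⟨0, hd⟩ = true) :
    IsDPerm P ↔ IsDPerm A ∧ IsDPerm B := by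
  rw [isDPerm_iff_dPermRows, isDPerm_iff_dPermRows, isDPerm_iff_dPermRows, ← forall_and]
  refine forall_congr' fun hd => ?_
  have hl := fun j hj => h.left ⟨0, hd⟩ j hj
  have hr := fun j hj => h.right ⟨0, hd⟩ j hj
  simp only [hε hd, ↓reduceIte, Nat.add_zero] at hl hr
  constructor
  · intro hP
    exact ⟨fun j hj => by rw [← hl j hj, hP j (by omega)],
      fun j hj => by have := hr j hj; rw [hP (s + j) (by omega)] at this; omega⟩
  · rintro ⟨hA, hB⟩ j hj
    rcases lt_or_ge j s with hjs | hjs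
    · rw [hl j hjs, hA j hjs]
    · have := hr (j - s) (by omega)
      rw [Nat.add_sub_cancel' hjs, hB (j - s) (by omega)] at this
      omega

theorem eq_glue (h : IsBlockSum (dPermRows P) (dPermRows A) (dPermRows B) ε s r)
    (hm : s + r = m) : P = glue hm ε A B := by
  have hg := isBlockSum_glue hm ε A B
  refine dPermRows_ext fun i j hj => ?_
  rcases lt_or_ge j s with hjs | hjs
  · rw [h.left i j hjs, hg.left i j hjs]
  · have e := h.right i (j - s) (by omega)
    have e' := hg.right i (j - s) (by omega)
    rw [Nat.add_sub_cancel' hjs] at e e'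
    rw [e, e']

end IsBlockSum

theorem glue_inj {s r m : ℕ} (hm : s + r = m) {ε : Fin d → Bool} {A A' : Fin d → Perm (Fin s)}
    {B B' : Fin d → Perm (Fin r)} (h : glue hm ε A B = glue hm ε A' B') : A = A' ∧ B = B' := by
  have hg := isBlockSum_glue hm ε A B
  have hg' := isBlockSum_glue hm ε A' B'
  rw [h] at hg
  refine ⟨dPermRows_ext fun i j hj => ?_, dPermRows_ext fun i j hj => ?_⟩
  · have := hg.left i j hj; rw [hg'.left i j hj] at this; omega
  · have := hg.right i j hj; rw [hg'.right i j hj] at this; omega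

abbrev SepDPerm (d m : ℕ) := {P : Fin d → Perm (Fin m) // IsDPerm P ∧ IsSepDPerm P}

abbrev CutDir (d : ℕ) := {ε : Fin d → Bool // ∀ hd : 0 < d, ε ⟨0, hd⟩ = true}

def HasDirectedCut {s : ℕ} (ε : Fin d → Bool) (A : Fin d → Perm (Fin s)) : Prop :=
  ∃ l, 0 < l ∧ l < s ∧ IsDirectedCut (dPermRows A) ε 0 l s

theorem card_cutDir (hd : 0 < d) : Nat.card (CutDir d) = 2 ^ (d - 1) := by
  obtain ⟨d, rfl⟩ : ∃ d', d = d' + 1 := ⟨d - 1, by omega⟩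
  let e : CutDir (d + 1) ≃ (Fin d → Bool) :=
    { toFun := fun ε => Fin.tail ε.1
      invFun := fun g => ⟨Fin.cons true g, fun _ => rfl⟩
      left_inv := fun ε => Subtype.ext <| funext fun j => by
        refine Fin.cases ?_ (fun j => ?_) j
        · exact (ε.2 hd).symm
        · rfl
      right_inv := fun g => Fin.tail_cons _ _ }
  rw [Nat.card_congr e, Nat.card_fun]
  simp

section Orientations

variable {s : ℕ}

theorem exists_hasDirectedCut (A : SepDPerm d s) (hs : 1 < s) :
    ∃ ε : CutDir d, HasDirectedCut ε.1 A.1 := by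
  obtain ⟨l, hl, hls, hcut⟩ := A.2.2.exists_isCut (by omega)
  have hdir := hcut.isDirectedCut hl hls
  exact ⟨⟨_, hdir.apply_zero A.2.1 hl hls⟩, l, hl, hls, hdir⟩

theorem HasDirectedCut.dir_eq {ε ε' : Fin d → Bool} {A : Fin d → Perm (Fin s)}
    (h : HasDirectedCut ε A) (h' : HasDirectedCut ε' A) : ε = ε' := by
  obtain ⟨l, hl, hls, hdir⟩ := h
  obtain ⟨l', hl', hls', hdir'⟩ := h'
  exact hdir.dir_eq hdir' hl hl' hls hls'

/-- A separable `d`-permutation with at least two columns has cuts of exactly one orientation. -/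
theorem card_sigma_hasDirectedCut (hs : 1 < s) :
    Nat.card (Σ ε : CutDir d, {A : SepDPerm d s // HasDirectedCut ε.1 A.1}) =
      Nat.card (SepDPerm d s) := by
  refine Nat.card_eq_of_bijective (fun x => x.2.1) ⟨?_, fun A => ?_⟩
  · rintro ⟨ε, A, hA⟩ ⟨ε', A', hA'⟩ (rfl : A = A')
    exact Sigma.subtype_ext (Subtype.ext (hA.dir_eq hA')) rfl
  · obtain ⟨ε, hε⟩ := exists_hasDirectedCut A hs
    exact ⟨⟨ε, A, hε⟩, rfl⟩

theorem card_sepDPerm_one : Nat.card (SepDPerm d 1) = 1 :=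
  have : Nonempty (SepDPerm d 1) := ⟨⟨1, fun _ => rfl, .single 0⟩⟩
  Nat.card_unique

theorem sum_card_not_hasDirectedCut (hd : 0 < d) (hs : 0 < s) :
    ∑ ε : CutDir d, Nat.card {A : SepDPerm d s // ¬ HasDirectedCut ε.1 A.1} =
      (2 ^ (d - 1) - 1) * Nat.card (SepDPerm d s) + if s = 1 then 1 else 0 := by
  classical
  have hcompl : ∀ ε : CutDir d, Nat.card {A : SepDPerm d s // ¬ HasDirectedCut ε.1 A.1} +
      Nat.card {A : SepDPerm d s // HasDirectedCut ε.1 A.1} = Nat.card (SepDPerm d s) := by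
    intro ε
    rw [add_comm, ← Nat.card_sum, Nat.card_congr (Equiv.sumCompl _)]
  have hpow : 1 ≤ 2 ^ (d - 1) := Nat.one_le_two_pow
  rcases (show s = 1 ∨ 1 < s by omega) with rfl | hs
  · have hnone : ∀ (ε : CutDir d) (A : SepDPerm d 1), ¬ HasDirectedCut ε.1 A.1 := by
      rintro ε A ⟨l, hl, hl1, -⟩
      omega
    rw [sum_congr rfl fun ε _ => Nat.card_congr (Equiv.subtypeUnivEquiv (hnone ε)), sum_const,
      card_univ, ← Nat.card_eq_fintype_card, card_cutDir hd, card_sepDPerm_one, if_pos rfl]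
    simp only [smul_eq_mul, mul_one]
    omega
  · have hsum := Finset.sum_congr (s₁ := univ) rfl fun ε _ => hcompl ε
    rw [sum_add_distrib, sum_const, card_univ, ← Nat.card_eq_fintype_card, card_cutDir hd,
      smul_eq_mul] at hsum
    have hcut : ∑ ε : CutDir d, Nat.card {A : SepDPerm d s // HasDirectedCut ε.1 A.1} =
        Nat.card (SepDPerm d s) := by
      rw [← Nat.card_sigma, card_sigma_hasDirectedCut hs]
    rw [if_neg hs.ne', add_zero, Nat.sub_mul, one_mul]
    omega

end Orientations

/-- A separable `d`-permutation of `[n + 2]`, cut at its first cut, with the orientation of that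
cut and the two blocks, the left one having no cut of the same orientation. -/
abbrev Decomposition (d n : ℕ) :=
  Σ p : antidiagonal n, Σ ε : CutDir d,
    {A : SepDPerm d (p.1.1 + 1) // ¬ HasDirectedCut ε.1 A.1} × SepDPerm d (p.1.2 + 1)

theorem antidiagonal_add_two {n : ℕ} (p : antidiagonal n) : p.1.1 + 1 + (p.1.2 + 1) = n + 2 := by
  have := mem_antidiagonal.mp p.2
  omega

def Decomposition.toSepDPerm {n : ℕ} : Decomposition d n → SepDPerm d (n + 2)
  | ⟨p, ε, ⟨A, _⟩, B⟩ =>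
    ⟨glue (antidiagonal_add_two p) ε.1 A.1 B.1,
      ((isBlockSum_glue _ ε.1 A.1 B.1).isDPerm_iff (antidiagonal_add_two p) ε.2).mpr ⟨A.2.1, B.2.1⟩,
      isSepDPerm_glue (antidiagonal_add_two p) ε.1 (Nat.succ_pos _) (Nat.succ_pos _) A.2.2 B.2.2⟩

theorem Decomposition.toSepDPerm_injective {n : ℕ} :
    Function.Injective (Decomposition.toSepDPerm (d := d) (n := n)) := by
  rintro ⟨p, ε, ⟨A, hA⟩, B⟩ ⟨p', ε', ⟨A', hA'⟩, B'⟩ h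
  have hP : glue (antidiagonal_add_two p) ε.1 A.1 B.1 =
      glue (antidiagonal_add_two p') ε'.1 A'.1 B'.1 := congrArg Subtype.val h
  have hsum := isBlockSum_glue (antidiagonal_add_two p) ε.1 A.1 B.1
  have hsum' := isBlockSum_glue (antidiagonal_add_two p') ε'.1 A'.1 B'.1
  rw [hP] at hsum
  have hcut := hsum.isDirectedCut
  have hcut' := hsum'.isDirectedCut
  rw [antidiagonal_add_two] at hcut hcut'
  -- both left blocks end at the first cut of the glued permutation
  have hle := hsum.le_of_isCut (Nat.succ_pos _) hA (Nat.succ_pos _)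
    (by rw [antidiagonal_add_two]; exact hcut'.isCut)
  have hle' := hsum'.le_of_isCut (Nat.succ_pos _) hA' (Nat.succ_pos _)
    (by rw [antidiagonal_add_two]; exact hcut.isCut)
  have hpn := mem_antidiagonal.mp p.2
  have hpn' := mem_antidiagonal.mp p'.2
  obtain rfl : p = p' := Subtype.ext (Prod.ext (by omega) (by omega))
  obtain rfl : ε = ε' := Subtype.ext (hcut.dir_eq hcut' (by omega) (by omega) (by omega) (by omega))
  obtain ⟨hAA', hBB'⟩ := glue_inj _ hP
  obtain rfl := Subtype.ext hAA'
  obtain rfl := Subtype.ext hBB'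
  rfl

theorem Decomposition.toSepDPerm_surjective {n : ℕ} :
    Function.Surjective (Decomposition.toSepDPerm (d := d) (n := n)) := by
  rintro ⟨P, hP, hsep⟩
  obtain ⟨l, hl, hln, hcut, hfirst⟩ := SepOn.exists_first_isCut hsep (by omega)
  obtain ⟨k, rfl⟩ : ∃ k, l = k + 1 := ⟨l - 1, by omega⟩
  let p : antidiagonal n := ⟨(k, n - k), mem_antidiagonal.mpr (by omega)⟩
  let ε : Fin d → Bool := fun i => decide (dPermRows P i 0 < dPermRows P i (k + 1))
  have hdir : IsDirectedCut (dPermRows P) ε 0 (k + 1) (n + 2) := hcut.isDirectedCut hl hln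
  have hε := hdir.apply_zero hP hl hln
  obtain ⟨A, B, hAB⟩ := exists_isBlockSum (antidiagonal_add_two p) hdir
  obtain ⟨hsepL, hsepR⟩ := hsep.of_isCut hl hln hcut
  obtain ⟨hdA, hdB⟩ := (hAB.isDPerm_iff (antidiagonal_add_two p) hε).mp hP
  have hsA := hAB.sepOn_left_iff.mp hsepL
  have hsB := hAB.sepOn_right_iff.mp (by rwa [antidiagonal_add_two p])
  have hnot : ¬ HasDirectedCut ε A := fun ⟨l', hl', hlk, hcutA⟩ => hfirst l' hl' hlk (by
    simpa [antidiagonal_add_two p] using (hAB.isCut_iff (Nat.succ_pos _) hl' hlk).mpr hcutA)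
  exact ⟨⟨p, ⟨ε, hε⟩, ⟨⟨A, hdA, hsA⟩, hnot⟩, ⟨B, hdB, hsB⟩⟩,
    Subtype.ext (hAB.eq_glue (antidiagonal_add_two p)).symm⟩

theorem card_sepDPerm_add_two (hd : 0 < d) (n : ℕ) :
    Nat.card (SepDPerm d (n + 2)) = Nat.card (SepDPerm d (n + 1)) + (2 ^ (d - 1) - 1) *
      ∑ p ∈ antidiagonal n, Nat.card (SepDPerm d (p.1 + 1)) * Nat.card (SepDPerm d (p.2 + 1)) := by
  rw [← Nat.card_eq_of_bijective _
    ⟨Decomposition.toSepDPerm_injective, Decomposition.toSepDPerm_surjective⟩]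
  simp only [Nat.card_sigma, Nat.card_prod, ← sum_mul,
    sum_card_not_hasDirectedCut hd (Nat.succ_pos _)]
  rw [sum_coe_sort (antidiagonal n) fun p => ((2 ^ (d - 1) - 1) * Nat.card (SepDPerm d (p.1 + 1)) +
      if p.1 + 1 = 1 then 1 else 0) * Nat.card (SepDPerm d (p.2 + 1))]
  simp only [add_mul, sum_add_distrib, mul_assoc, ← mul_sum, add_comm (Nat.card _)]
  congr 1
  rw [sum_eq_single (0, n) (fun p hp hp0 => ?_) (fun h => absurd (by simp) h)]
  · simp
  · have := mem_antidiagonal.mp hp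
    rw [if_neg (by rintro h; exact hp0 (Prod.ext (by omega) (by omega))), zero_mul]

theorem PowerSeries.coeff_succ_of_eq {R : Type*} [CommRing R] {f : PowerSeries R} {c : R}
    (hf : f = 1 + X * f + C c * X * f ^ 2) (n : ℕ) :
    coeff (n + 1) f = coeff n f + c * ∑ p ∈ antidiagonal n, coeff p.1 f * coeff p.2 f := by
  conv_lhs => rw [hf]
  rw [mul_assoc, map_add, map_add, coeff_one, if_neg n.succ_ne_zero, coeff_succ_X_mul,
    coeff_C_mul, coeff_succ_X_mul, sq, coeff_mul, zero_add]

open PowerSeries in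
/-- The power series `f` with `f = 1 + x f + (2^(d-1)-1) x f²`, `f(0) = 1`, is the
generating function of the numbers of separable d-permutations of `[n+1]`. -/
theorem sep_dPerm_gf (d : ℕ) (hd : 1 ≤ d) (f : PowerSeries ℚ)
    (hf0 : constantCoeff f = 1)
    (hf : f = 1 + X * f + (((2 ^ (d - 1) - 1 : ℕ) : PowerSeries ℚ)) * X * f ^ 2) :
    ∀ n : ℕ, coeff n f =
      Nat.card {P : Fin d → Equiv.Perm (Fin (n + 1)) // IsDPerm P ∧ IsSepDPerm P} := by
  rw [← map_natCast (C (R := ℚ))] at hf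
  intro n
  induction n using Nat.strong_induction_on with
  | _ n ih =>
    rcases n with _ | n
    · rw [coeff_zero_eq_constantCoeff, hf0, card_sepDPerm_one, Nat.cast_one]
    · have hprod : ∀ p ∈ antidiagonal n, coeff p.1 f * coeff p.2 f =
          (Nat.card (SepDPerm d (p.1 + 1)) * Nat.card (SepDPerm d (p.2 + 1)) : ℕ) := by
        intro p hp
        have := mem_antidiagonal.mp hp
        rw [ih p.1 (by omega), ih p.2 (by omega), Nat.cast_mul]
      rw [coeff_succ_of_eq hf, sum_congr rfl hprod, ih n n.lt_succ_self,
        card_sepDPerm_add_two hd]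
      push_cast
      rfl
end

section
/- The number of separable d-permutations of {1,2,3} equals 2^(d-1)·(2^d − 1). -/
/-!
For `n = 3` a split point `ℓ ∈ {1, 2}` cuts off a block of at most two columns, and such blocks
are always separable, so a `d`-permutation of `[3]` is separable iff in every row the first entry
is extremal (`ℓ = 1`) or in every row the last entry is extremal (`ℓ = 2`). Each condition leaves
`4` of the `6` permutations for every row but the first, both together leave the `2` with
`σ 1 = 1`, and inclusion–exclusion gives `2 · 4^(d-1) - 2^(d-1)`.
-/

open Finset Fintype

/-- The split condition in the definition of `SepOn`, for a single row. -/
def Separates (f : ℕ → ℕ) (a l b : ℕ) : Prop :=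
  (∀ j1 j2, a ≤ j1 → j1 < l → l ≤ j2 → j2 < b → f j1 < f j2) ∨
    (∀ j1 j2, a ≤ j1 → j1 < l → l ≤ j2 → j2 < b → f j2 < f j1)

section Separates

variable {f : ℕ → ℕ} {a : ℕ}

lemma separates_add_two_iff : Separates f a (a + 1) (a + 2) ↔ f a ≠ f (a + 1) := by
  have hcols : ∀ j1 j2, a ≤ j1 → j1 < a + 1 → a + 1 ≤ j2 → j2 < a + 2 →
      j1 = a ∧ j2 = a + 1 := by omega
  constructor
  · rintro (h | h)
    · exact (h a (a + 1) le_rfl (by omega) le_rfl (by omega)).ne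
    · exact (h a (a + 1) le_rfl (by omega) le_rfl (by omega)).ne'
  · intro h
    rcases h.lt_or_gt with h | h
    · refine Or.inl fun j1 j2 hj1 hj1' hj2 hj2' => ?_
      obtain ⟨rfl, rfl⟩ := hcols j1 j2 hj1 hj1' hj2 hj2'
      exact h
    · refine Or.inr fun j1 j2 hj1 hj1' hj2 hj2' => ?_
      obtain ⟨rfl, rfl⟩ := hcols j1 j2 hj1 hj1' hj2 hj2'
      exact h

lemma separates_first_iff : Separates f a (a + 1) (a + 3) ↔
    (f a < f (a + 1) ∧ f a < f (a + 2)) ∨ (f (a + 1) < f a ∧ f (a + 2) < f a) := by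
  have hcols : ∀ j1 j2, a ≤ j1 → j1 < a + 1 → a + 1 ≤ j2 → j2 < a + 3 →
      j1 = a ∧ (j2 = a + 1 ∨ j2 = a + 2) := by omega
  constructor
  · rintro (h | h)
    · exact Or.inl ⟨h _ _ le_rfl (by omega) le_rfl (by omega),
        h _ _ le_rfl (by omega) (by omega) (by omega)⟩
    · exact Or.inr ⟨h _ _ le_rfl (by omega) le_rfl (by omega),
        h _ _ le_rfl (by omega) (by omega) (by omega)⟩
  · rintro (⟨h1, h2⟩ | ⟨h1, h2⟩)
    · refine Or.inl fun j1 j2 hj1 hj1' hj2 hj2' => ?_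
      obtain ⟨rfl, rfl | rfl⟩ := hcols j1 j2 hj1 hj1' hj2 hj2' <;> assumption
    · refine Or.inr fun j1 j2 hj1 hj1' hj2 hj2' => ?_
      obtain ⟨rfl, rfl | rfl⟩ := hcols j1 j2 hj1 hj1' hj2 hj2' <;> assumption

lemma separates_last_iff : Separates f a (a + 2) (a + 3) ↔
    (f a < f (a + 2) ∧ f (a + 1) < f (a + 2)) ∨ (f (a + 2) < f a ∧ f (a + 2) < f (a + 1)) := by
  have hcols : ∀ j1 j2, a ≤ j1 → j1 < a + 2 → a + 2 ≤ j2 → j2 < a + 3 →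
      (j1 = a ∨ j1 = a + 1) ∧ j2 = a + 2 := by omega
  constructor
  · rintro (h | h)
    · exact Or.inl ⟨h _ _ le_rfl (by omega) le_rfl (by omega),
        h _ _ (by omega) (by omega) le_rfl (by omega)⟩
    · exact Or.inr ⟨h _ _ le_rfl (by omega) le_rfl (by omega),
        h _ _ (by omega) (by omega) le_rfl (by omega)⟩
  · rintro (⟨h1, h2⟩ | ⟨h1, h2⟩)
    · refine Or.inl fun j1 j2 hj1 hj1' hj2 hj2' => ?_
      obtain ⟨rfl | rfl, rfl⟩ := hcols j1 j2 hj1 hj1' hj2 hj2' <;> assumption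
    · refine Or.inr fun j1 j2 hj1 hj1' hj2 hj2' => ?_
      obtain ⟨rfl | rfl, rfl⟩ := hcols j1 j2 hj1 hj1' hj2 hj2' <;> assumption

end Separates

namespace SepOn

variable {d : ℕ} {P : Fin d → ℕ → ℕ} {a : ℕ}

lemma add_two (h : ∀ i, P i a ≠ P i (a + 1)) : SepOn P a (a + 2) :=
  split a (a + 1) (a + 2) (by omega) (by omega) (fun i => separates_add_two_iff.2 (h i))
    (single a) (single (a + 1))

lemma add_three_iff (hP : ∀ i, Set.InjOn (P i) (Set.Ico a (a + 3))) :
    SepOn P a (a + 3) ↔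
      (∀ i, Separates (P i) a (a + 1) (a + 3)) ∨ (∀ i, Separates (P i) a (a + 2) (a + 3)) := by
  have hne : ∀ i j, a ≤ j → j + 1 < a + 3 → P i j ≠ P i (j + 1) := fun i j h1 h2 he =>
    absurd (hP i ⟨h1, by omega⟩ ⟨by omega, h2⟩ he) (by omega)
  constructor
  · intro h
    generalize hb : a + 3 = b at h
    obtain _ | ⟨_, l, _, hal, hlb, hsep, -, -⟩ := h
    · omega
    · obtain rfl | rfl : l = a + 1 ∨ l = a + 2 := by omega
      exacts [Or.inl hsep, Or.inr hsep]
  · rintro (hsep | hsep)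
    · exact split a (a + 1) (a + 3) (by omega) (by omega) hsep (single a)
        (add_two fun i => hne i (a + 1) (by omega) (by omega))
    · exact split a (a + 2) (a + 3) (by omega) (by omega) hsep
        (add_two fun i => hne i a le_rfl (by omega)) (single (a + 2))

end SepOn

section DPerm

variable {d : ℕ}

lemma injOn_dPermRows {n : ℕ} (P : Fin d → Equiv.Perm (Fin n)) (i : Fin d) :
    Set.InjOn (dPermRows P i) (Set.Iio n) := fun j hj k hk h => by
  simpa [dPermRows, Set.mem_Iio.1 hj, Set.mem_Iio.1 hk, Fin.val_inj] using h

lemma separates_dPermRows_first_iff (P : Fin d → Equiv.Perm (Fin 3)) (i : Fin d) :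
    Separates (dPermRows P i) 0 1 3 ↔ P i 0 = 0 ∨ P i 0 = 2 := by
  rw [separates_first_iff (a := 0)]
  simp only [dPermRows]
  generalize P i = σ
  revert σ
  decide

lemma separates_dPermRows_last_iff (P : Fin d → Equiv.Perm (Fin 3)) (i : Fin d) :
    Separates (dPermRows P i) 0 2 3 ↔ P i 2 = 0 ∨ P i 2 = 2 := by
  rw [separates_last_iff (a := 0)]
  simp only [dPermRows]
  generalize P i = σ
  revert σ
  decide

lemma isSepDPerm_three_iff (P : Fin d → Equiv.Perm (Fin 3)) :
    IsSepDPerm P ↔ (∀ i, P i 0 = 0 ∨ P i 0 = 2) ∨ (∀ i, P i 2 = 0 ∨ P i 2 = 2) := by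
  simp only [← separates_dPermRows_first_iff, ← separates_dPermRows_last_iff]
  exact SepOn.add_three_iff fun i => (injOn_dPermRows P i).mono fun j hj => hj.2

lemma isDPerm_iff_zero {m n : ℕ} (P : Fin (m + 1) → Equiv.Perm (Fin n)) :
    IsDPerm P ↔ P 0 = 1 :=
  ⟨fun h => h m.succ_pos, fun h _ => h⟩

end DPerm

section Counting

variable {α : Type*} [Fintype α] [DecidableEq α]

lemma card_filter_zero_eq_and_forall_mem (m : ℕ) {x : α} {s : Finset α} (hx : x ∈ s) :
    #{P : Fin (m + 1) → α | P 0 = x ∧ ∀ i, P i ∈ s} = #s ^ m := by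
  have hpi : ({P | P 0 = x ∧ ∀ i, P i ∈ s} : Finset (Fin (m + 1) → α)) =
      piFinset (Function.update (fun _ => s) 0 {x}) := by
    rw [piFinset_update_singleton_eq_filter_piFinset_eq _ _ hx]
    ext P
    simp only [mem_filter, mem_univ, true_and, mem_piFinset]
    tauto
  rw [hpi, card_piFinset, Fin.prod_univ_succ]
  simp

lemma card_filter_zero_eq_and_forall_mem_or (m : ℕ) {x : α} {s t : Finset α}
    (hs : x ∈ s) (ht : x ∈ t) :
    #{P : Fin (m + 1) → α | P 0 = x ∧ ((∀ i, P i ∈ s) ∨ ∀ i, P i ∈ t)} =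
      #s ^ m + #t ^ m - #(s ∩ t) ^ m := by
  have hinter (P : Fin (m + 1) → α) : ((P 0 = x ∧ ∀ i, P i ∈ s) ∧ P 0 = x ∧ ∀ i, P i ∈ t) ↔
      P 0 = x ∧ ∀ i, P i ∈ s ∩ t := by
    simp only [mem_inter, forall_and]
    tauto
  simp only [and_or_left, filter_or, card_union, ← filter_and, hinter,
    card_filter_zero_eq_and_forall_mem m hs, card_filter_zero_eq_and_forall_mem m ht,
    card_filter_zero_eq_and_forall_mem m (mem_inter.2 ⟨hs, ht⟩)]

end Counting

/-- The number of separable d-permutations of `{1,2,3}` is `2^(d-1)·(2^d − 1)`. -/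
theorem sep_dPerm_card_three (d : ℕ) (hd : 1 ≤ d) :
    Nat.card {P : Fin d → Equiv.Perm (Fin 3) // IsDPerm P ∧ IsSepDPerm P} =
      2 ^ (d - 1) * (2 ^ d - 1) := by
  obtain ⟨m, rfl⟩ : ∃ m, d = m + 1 := ⟨d - 1, by omega⟩
  let first : Finset (Equiv.Perm (Fin 3)) := {σ | σ 0 = 0 ∨ σ 0 = 2}
  let last : Finset (Equiv.Perm (Fin 3)) := {σ | σ 2 = 0 ∨ σ 2 = 2}
  have hcard : #first = 4 ∧ #last = 4 ∧ #(first ∩ last) = 2 := by decide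
  have hsep (P : Fin (m + 1) → Equiv.Perm (Fin 3)) : IsDPerm P ∧ IsSepDPerm P ↔
      P 0 = 1 ∧ ((∀ i, P i ∈ first) ∨ ∀ i, P i ∈ last) := by
    simp only [isDPerm_iff_zero, isSepDPerm_three_iff, first, last, mem_filter, mem_univ,
      true_and]
  rw [Nat.card_congr (Equiv.subtypeEquivRight hsep), Nat.card_eq_fintype_card,
    Fintype.card_subtype, card_filter_zero_eq_and_forall_mem_or m (by decide) (by decide),
    hcard.1, hcard.2.1, hcard.2.2, Nat.add_sub_cancel, pow_succ, show (4 : ℕ) = 2 * 2 from rfl,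
    mul_pow, Nat.mul_sub, mul_one]
  congr 1
  ring
end

section
/- A d-permutation of [3] (first row 1 2 3) is separable if and only if the value 2 does not occur both in the first column and in the third column, i.e., either no row has 2 in position 1, or no row has 2 in position 3. -/
/-!
A split of the three columns is at position 1 or 2, and the remaining block of two columns is
always separable since the rows are injective. Splitting after column 1 works for a row exactly
when its first entry is the smallest or the largest of the row, and for a permutation of `[3]`
this means that it is not the middle value; symmetrically for splitting before column 3.
-/

def IsStrictExtreme (x y z : ℕ) : Prop :=
  (x < y ∧ x < z) ∨ (y < x ∧ z < x)

theorem Fin.isStrictExtreme_val_iff_ne_one {x y z : Fin 3} (hxy : x ≠ y) (hxz : x ≠ z)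
    (hyz : y ≠ z) : IsStrictExtreme x y z ↔ x ≠ 1 := by
  unfold IsStrictExtreme
  revert x y z
  decide

theorem Equiv.Perm.isStrictExtreme_val_iff_ne_one (σ : Equiv.Perm (Fin 3)) {j k l : Fin 3}
    (hjk : j ≠ k) (hjl : j ≠ l) (hkl : k ≠ l) :
    IsStrictExtreme (σ j) (σ k) (σ l) ↔ σ j ≠ 1 :=
  Fin.isStrictExtreme_val_iff_ne_one (σ.injective.ne hjk) (σ.injective.ne hjl) (σ.injective.ne hkl)

section SepOn

variable {d : ℕ} (P : Fin d → ℕ → ℕ)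

/-- The condition `hmono` of `SepOn.split`. -/
def SplitsAt (a l b : ℕ) : Prop :=
  ∀ i : Fin d,
    (∀ j1 j2, a ≤ j1 → j1 < l → l ≤ j2 → j2 < b → P i j1 < P i j2) ∨
    (∀ j1 j2, a ≤ j1 → j1 < l → l ≤ j2 → j2 < b → P i j2 < P i j1)

variable {P}

theorem splitsAt_succ_succ_iff {a : ℕ} :
    SplitsAt P a (a + 1) (a + 2) ↔ ∀ i, P i a ≠ P i (a + 1) := by
  have forall_iff (r : ℕ → ℕ → Prop) :
      (∀ j1 j2, a ≤ j1 → j1 < a + 1 → a + 1 ≤ j2 → j2 < a + 2 → r j1 j2) ↔ r a (a + 1) :=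
    ⟨fun h => h a (a + 1) le_rfl (by omega) le_rfl (by omega), fun h j1 j2 _ _ _ _ => by
      obtain rfl : j1 = a := by omega
      obtain rfl : j2 = j1 + 1 := by omega
      exact h⟩
  simp only [SplitsAt, forall_iff, lt_or_lt_iff_ne]

theorem sepOn_pair {a : ℕ} (h : ∀ i, P i a ≠ P i (a + 1)) : SepOn P a (a + 2) :=
  .split a (a + 1) (a + 2) (by omega) (by omega) (splitsAt_succ_succ_iff.mpr h)
    (.single a) (.single (a + 1))

theorem splitsAt_left_iff {a : ℕ} :
    SplitsAt P a (a + 1) (a + 3) ↔ ∀ i, IsStrictExtreme (P i a) (P i (a + 1)) (P i (a + 2)) := by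
  have forall_iff (r : ℕ → ℕ → Prop) :
      (∀ j1 j2, a ≤ j1 → j1 < a + 1 → a + 1 ≤ j2 → j2 < a + 3 → r j1 j2) ↔
        r a (a + 1) ∧ r a (a + 2) :=
    ⟨fun h => ⟨h a (a + 1) le_rfl (by omega) le_rfl (by omega),
        h a (a + 2) le_rfl (by omega) (by omega) (by omega)⟩,
      fun h j1 j2 _ _ _ _ => by
        obtain rfl : j1 = a := by omega
        obtain rfl | rfl : j2 = j1 + 1 ∨ j2 = j1 + 2 := by omega
        exacts [h.1, h.2]⟩
  simp only [SplitsAt, forall_iff, IsStrictExtreme]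

theorem splitsAt_right_iff {a : ℕ} :
    SplitsAt P a (a + 2) (a + 3) ↔ ∀ i, IsStrictExtreme (P i (a + 2)) (P i a) (P i (a + 1)) := by
  have forall_iff (r : ℕ → ℕ → Prop) :
      (∀ j1 j2, a ≤ j1 → j1 < a + 2 → a + 2 ≤ j2 → j2 < a + 3 → r j1 j2) ↔
        r a (a + 2) ∧ r (a + 1) (a + 2) :=
    ⟨fun h => ⟨h a (a + 2) le_rfl (by omega) le_rfl (by omega),
        h (a + 1) (a + 2) (by omega) (by omega) le_rfl (by omega)⟩,
      fun h j1 j2 _ _ _ _ => by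
        obtain rfl : j2 = a + 2 := by omega
        obtain rfl | rfl : j1 = a ∨ j1 = a + 1 := by omega
        exacts [h.1, h.2]⟩
  simp only [SplitsAt, forall_iff, IsStrictExtreme, or_comm]

theorem sepOn_three_iff {a : ℕ} (h01 : ∀ i, P i a ≠ P i (a + 1))
    (h12 : ∀ i, P i (a + 1) ≠ P i (a + 2)) :
    SepOn P a (a + 3) ↔ SplitsAt P a (a + 1) (a + 3) ∨ SplitsAt P a (a + 2) (a + 3) := by
  constructor
  · rintro (_ | ⟨_, l, _, hal, hlb, hsplit, -, -⟩)
    obtain rfl | rfl : l = a + 1 ∨ l = a + 2 := by omega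
    exacts [.inl hsplit, .inr hsplit]
  · rintro (hsplit | hsplit)
    · exact .split a (a + 1) (a + 3) (by omega) (by omega) hsplit (.single a) (sepOn_pair h12)
    · exact .split a (a + 2) (a + 3) (by omega) (by omega) hsplit (sepOn_pair h01) (.single _)

end SepOn

theorem dPermRows_ne {d n : ℕ} (P : Fin d → Equiv.Perm (Fin n)) (i : Fin d) {j k : ℕ}
    (hj : j < n) (hk : k < n) (hjk : j ≠ k) : dPermRows P i j ≠ dPermRows P i k := by
  simp only [dPermRows, hj, hk, dite_true]
  exact Fin.val_injective.ne ((P i).injective.ne (Fin.ne_of_val_ne hjk))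

theorem sep_dPerm_three_iff_general (d : ℕ)
    (P : Fin d → Equiv.Perm (Fin 3)) :
    IsSepDPerm P ↔
      (∀ i : Fin d, P i 0 ≠ 1) ∨ (∀ i : Fin d, P i 2 ≠ 1) := by
  refine (sepOn_three_iff (a := 0) (fun i => dPermRows_ne P i (by omega) (by omega) (by omega))
    (fun i => dPermRows_ne P i (by omega) (by omega) (by omega))).trans ?_
  rw [splitsAt_left_iff, splitsAt_right_iff]
  refine or_congr (forall_congr' fun i => ?_) (forall_congr' fun i => ?_)
  · exact (P i).isStrictExtreme_val_iff_ne_one (j := 0) (k := 1) (l := 2) (by decide) (by decide)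
      (by decide)
  · exact (P i).isStrictExtreme_val_iff_ne_one (j := 2) (k := 0) (l := 1) (by decide) (by decide)
      (by decide)

/-- A d-permutation of `[3]` is separable iff the (0-indexed) value `1`
(i.e. the value 2 of `{1,2,3}`) does not occur both in the first and in the
last column: either no row has value 2 in position 1, or no row has value 2 in
position 3. -/
theorem sep_dPerm_three_iff (d : ℕ) (hd : 0 < d)
    (P : Fin d → Equiv.Perm (Fin 3)) (hP : P ⟨0, hd⟩ = 1) :
    IsSepDPerm P ↔
      (∀ i : Fin d, P i 0 ≠ 1) ∨ (∀ i : Fin d, P i 2 ≠ 1) :=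
  sep_dPerm_three_iff_general d P
end

section
/- Every separable d-permutation avoids the pattern π1 = (rows: 1234 / 2413): no separable d-permutation contains two rows and four columns whose induced relative order pattern is (1234, 2413). -/
/-!
A split of a separable block separates its columns into two consecutive blocks,
and in every row one block lies entirely below the other; so each side of the split
meets the four columns in a set that is an interval for the value order of every row.
For the rows `1234` and `2413` the only such sets are `∅` and all four columns, hence
the four columns never get separated, and descending through the splits they end in a
block of a single column, which is absurd.
-/

def IsIntervalSplit {ι α : Type*} [LT α] (r : ι → α) (s : ι → Bool) : Prop :=
  ∀ x y z, r x < r y → r y < r z → s x = s z → s y = s x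

lemma IsIntervalSplit.of_lt_imp {ι α β : Type*} [LT α] [LT β] {r : ι → α} {r' : ι → β}
    {s : ι → Bool} (h : IsIntervalSplit r s) (hr : ∀ x y, r' x < r' y → r x < r y) :
    IsIntervalSplit r' s :=
  fun x y z hxy hyz => h x y z (hr x y hxy) (hr y z hyz)

lemma pi1_intervalSplit_const (s : Fin 4 → Bool) (h₁ : IsIntervalSplit (id : Fin 4 → Fin 4) s)
    (h₂ : IsIntervalSplit (![1, 3, 0, 2] : Fin 4 → Fin 4) s) : ∀ x y, s x = s y := by
  revert s
  unfold IsIntervalSplit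
  decide

section SepOn

variable {d : ℕ} {Q : Fin d → ℕ → ℕ} {ι : Type*}

lemma isIntervalSplit_of_split {f : ℕ → ℕ} {a l b : ℕ} {c : ι → ℕ}
    (hc : ∀ x, c x ∈ Set.Ico a b)
    (hf : (∀ j₁ j₂, a ≤ j₁ → j₁ < l → l ≤ j₂ → j₂ < b → f j₁ < f j₂) ∨
      (∀ j₁ j₂, a ≤ j₁ → j₁ < l → l ≤ j₂ → j₂ < b → f j₂ < f j₁)) :
    IsIntervalSplit (f ∘ c) (fun x => decide (c x < l)) := by
  intro x y z hxy hyz hxz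
  obtain ⟨hx₁, hx₂⟩ := hc x
  obtain ⟨hy₁, hy₂⟩ := hc y
  obtain ⟨hz₁, hz₂⟩ := hc z
  simp only [Function.comp_apply, decide_eq_decide] at hxy hyz hxz ⊢
  rcases hf with H | H <;> constructor <;> intro h <;> by_contra h'
  · exact (H _ _ hy₁ h (by omega) hx₂).asymm hxy
  · exact (H _ _ hz₁ (hxz.mp h) (by omega) hy₂).asymm hyz
  · exact (H _ _ hy₁ h (by omega) hz₂).asymm hyz
  · exact (H _ _ hx₁ h (by omega) hy₂).asymm hxy

theorem SepOn.eq_of_forall_intervalSplit_const {a b : ℕ} (h : SepOn Q a b) (c : ι → ℕ)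
    (hc : ∀ x, c x ∈ Set.Ico a b)
    (hsplit : ∀ s : ι → Bool, (∀ i, IsIntervalSplit (Q i ∘ c) s) → ∀ x y, s x = s y)
    (x y : ι) : c x = c y := by
  induction h with
  | single a =>
    obtain ⟨hx₁, hx₂⟩ := hc x
    obtain ⟨hy₁, hy₂⟩ := hc y
    omega
  | split a l b _ _ hmono _ _ ihL ihR =>
    have hside : ∀ z, c z < l ↔ c x < l := fun z =>
      decide_eq_decide.mp (hsplit _ (fun i => isIntervalSplit_of_split hc (hmono i)) z x)
    by_cases hx : c x < l
    · exact ihL fun z => ⟨(hc z).1, (hside z).mpr hx⟩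
    · exact ihR fun z => ⟨not_lt.mp (hx ∘ (hside z).mp), (hc z).2⟩

end SepOn

lemma dPermRows_apply {d n : ℕ} (P : Fin d → Equiv.Perm (Fin n)) (i : Fin d) (j : Fin n) :
    dPermRows P i j = P i j := by
  simp [dPermRows]

theorem sep_dPerm_avoids_pi1_general (d n : ℕ) (P : Fin d → Equiv.Perm (Fin n))
    (hsep : IsSepDPerm P) :
    ¬ ∃ (i₁ i₂ : Fin d) (c : Fin 4 → Fin n), i₁ ≠ i₂ ∧
        Function.Injective c ∧
        StrictMono (fun j : Fin 4 => P i₁ (c j)) ∧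
        (∀ j k : Fin 4, (![1, 3, 0, 2] : Fin 4 → Fin 4) j < ![1, 3, 0, 2] k ↔
          P i₂ (c j) < P i₂ (c k)) := by
  rintro ⟨i₁, i₂, c, -, -, h₁, h₂⟩
  have hrow : ∀ i, (dPermRows P i ∘ fun k => (c k : ℕ)) = fun k => (P i (c k) : ℕ) :=
    fun i => funext fun k => dPermRows_apply P i (c k)
  have hcols : ∀ k, (c k : ℕ) = c 0 :=
    fun k => hsep.eq_of_forall_intervalSplit_const _ (fun k => ⟨Nat.zero_le _, (c k).isLt⟩)
      (fun s hs => pi1_intervalSplit_const s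
        ((hs i₁).of_lt_imp fun j k hjk => by rw [hrow]; exact h₁ hjk)
        ((hs i₂).of_lt_imp fun j k hjk => by rw [hrow]; exact (h₂ j k).mp hjk)) k 0
  exact (h₁ (show (0 : Fin 4) < 1 by decide)).ne (congrArg (P i₁) (Fin.ext (hcols 1)).symm)

/-- Every separable d-permutation avoids the pattern `π₁ = (1234 / 2413)`:
there are no two distinct rows `i₁, i₂` and four columns (which we may list so
that row `i₁` is increasing on them) such that row `i₁` induces the pattern
`1234` and row `i₂` induces the pattern `2413`. -/
theorem sep_dPerm_avoids_pi1 (d n : ℕ) (P : Fin d → Equiv.Perm (Fin n))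
    (hP : IsDPerm P) (hsep : IsSepDPerm P) :
    ¬ ∃ (i₁ i₂ : Fin d) (c : Fin 4 → Fin n), i₁ ≠ i₂ ∧
        Function.Injective c ∧
        StrictMono (fun j : Fin 4 => P i₁ (c j)) ∧
        (∀ j k : Fin 4, (![1, 3, 0, 2] : Fin 4 → Fin 4) j < ![1, 3, 0, 2] k ↔
          P i₂ (c j) < P i₂ (c k)) :=
  sep_dPerm_avoids_pi1_general d n P hsep
end

section
/- There is a bijection between Schröder paths of length 2n whose up-steps are colored with colors from {1,...,d−1} and binary trees with n vertices colored by {0,1,...,d−1} in which no vertex has a right child of the same color. -/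
/-- Steps of a Schröder path whose up-steps are colored by `Fin k`:
a colored up-step `(1,1)`, a down-step `(1,−1)`, or a level-step `(2,0)`. -/
inductive SStep (k : ℕ) : Type
  | U (c : Fin k) : SStep k
  | D : SStep k
  | L : SStep k

namespace SStep

/-- The horizontal length of a step. -/
def len {k : ℕ} : SStep k → ℕ
  | U _ => 1
  | D => 1
  | L => 2

/-- The height change of a step. -/
def ht {k : ℕ} : SStep k → ℤ
  | U _ => 1
  | D => -1
  | L => 0

end SStep

/-- A list of steps is a Schröder path if it ends at height `0` and never goes
below the x-axis. -/
def IsSchroederPath {k : ℕ} (p : List (SStep k)) : Prop :=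
  (p.map SStep.ht).sum = 0 ∧ ∀ q : List (SStep k), q <+: p → 0 ≤ (q.map SStep.ht).sum

/-- Binary trees whose vertices are colored by `Fin d`. -/
inductive CTree (d : ℕ) : Type
  | nil : CTree d
  | node (c : Fin d) (l r : CTree d) : CTree d

namespace CTree

/-- The number of vertices of a colored binary tree. -/
def size {d : ℕ} : CTree d → ℕ
  | nil => 0
  | node _ l r => 1 + size l + size r

/-- The color of the root, if any. -/
def rootColor {d : ℕ} : CTree d → Option (Fin d)
  | nil => none
  | node c _ _ => some c

/-- No vertex has a right child of the same color. -/
def Good {d : ℕ} : CTree d → Prop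
  | nil => True
  | node c l r => rootColor r ≠ some c ∧ Good l ∧ Good r

end CTree

/-!
Cutting a colored Schröder path at its first return to the axis after an initial up-step shows
that these paths are the words of the unambiguous grammar `S ::= ε | L S | U c S D S`, so they
correspond, with half their length as weight, to its derivation trees. A derivation tree becomes a
colored binary tree by turning `L S` into a vertex of color `0` without right child, and
`U c S₁ D S₂` into a vertex with subtrees `S₁`, `S₂` whose color is the `c`-th of the `d - 1`
colors different from the root color of `S₂`, an empty tree counting as color `0`. Reading each
color relative to the root color of the right subtree inverts this on good trees, since there a
vertex has the color of its right subtree, in this convention, only if it has color `0` and no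
right child.
-/

theorem List.IsPrefix.prefix_or_eq_append {α : Type*} {q l₁ l₂ : List α}
    (h : q <+: l₁ ++ l₂) : q <+: l₁ ∨ ∃ r, q = l₁ ++ r ∧ r <+: l₂ := by
  rcases le_or_gt q.length l₁.length with hl | hl
  · exact .inl (List.prefix_of_prefix_length_le h (List.prefix_append l₁ l₂) hl)
  · obtain ⟨r, rfl⟩ := List.prefix_of_prefix_length_le (List.prefix_append l₁ l₂) h hl.le
    exact .inr ⟨r, rfl, (List.prefix_append_right_inj l₁).1 h⟩

section

variable {k : ℕ}

def pathHeight (l : List (SStep k)) : ℤ := (l.map SStep.ht).sum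

@[simp] theorem pathHeight_nil : pathHeight ([] : List (SStep k)) = 0 := rfl

@[simp] theorem pathHeight_cons (s : SStep k) (l : List (SStep k)) :
    pathHeight (s :: l) = s.ht + pathHeight l := by
  simp [pathHeight]

@[simp] theorem pathHeight_append (l₁ l₂ : List (SStep k)) :
    pathHeight (l₁ ++ l₂) = pathHeight l₁ + pathHeight l₂ := by
  simp [pathHeight]

theorem isSchroederPath_iff {l : List (SStep k)} :
    IsSchroederPath l ↔ pathHeight l = 0 ∧ ∀ q, q <+: l → 0 ≤ pathHeight q := Iff.rfl

theorem isSchroederPath_nil : IsSchroederPath ([] : List (SStep k)) :=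
  ⟨rfl, fun q hq => by rw [List.prefix_nil.1 hq]; rfl⟩

theorem not_isSchroederPath_D_cons (l : List (SStep k)) : ¬ IsSchroederPath (SStep.D :: l) :=
  fun h => absurd (h.2 [SStep.D] (List.prefix_cons_iff.2 (.inr ⟨[], rfl, List.nil_prefix⟩)))
    (by simp [SStep.ht])

theorem isSchroederPath_L_cons {l : List (SStep k)} :
    IsSchroederPath (SStep.L :: l) ↔ IsSchroederPath l := by
  refine ⟨fun ⟨h0, hpre⟩ => ⟨by simpa [SStep.ht] using h0, fun q hq => ?_⟩,
    fun ⟨h0, hpre⟩ => ⟨by simp [SStep.ht, h0], fun q hq => ?_⟩⟩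
  · simpa [SStep.ht] using hpre _ (List.cons_prefix_cons.2 ⟨rfl, hq⟩)
  · rcases List.prefix_cons_iff.1 hq with rfl | ⟨q, rfl, hq'⟩
    · rfl
    · simpa [SStep.ht] using hpre q hq'

theorem IsSchroederPath.up (c : Fin k) {t₁ t₂ : List (SStep k)} (h₁ : IsSchroederPath t₁)
    (h₂ : IsSchroederPath t₂) : IsSchroederPath (SStep.U c :: (t₁ ++ SStep.D :: t₂)) := by
  obtain ⟨h₁0, h₁pre⟩ := isSchroederPath_iff.1 h₁
  obtain ⟨h₂0, h₂pre⟩ := isSchroederPath_iff.1 h₂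
  refine isSchroederPath_iff.2 ⟨by simp [SStep.ht, h₁0, h₂0], fun q hq => ?_⟩
  rcases List.prefix_cons_iff.1 hq with rfl | ⟨q, rfl, hq'⟩
  · rfl
  rcases hq'.prefix_or_eq_append with hq₁ | ⟨r, rfl, hr⟩
  · have := h₁pre q hq₁
    simp only [pathHeight_cons, SStep.ht]
    omega
  rcases List.prefix_cons_iff.1 hr with rfl | ⟨r, rfl, hr'⟩
  · simp [SStep.ht, h₁0]
  · have := h₂pre r hr'
    simp only [pathHeight_cons, pathHeight_append, SStep.ht, h₁0]
    omega

theorem IsSchroederPath.exists_first_return {c : Fin k} {l : List (SStep k)}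
    (h : IsSchroederPath (SStep.U c :: l)) :
    ∃ t₁ t₂, l = t₁ ++ SStep.D :: t₂ ∧ IsSchroederPath t₁ ∧ IsSchroederPath t₂ := by
  obtain ⟨h0, hpre⟩ := isSchroederPath_iff.1 h
  have hl : pathHeight l = -1 := by
    simp only [pathHeight_cons, SStep.ht] at h0; omega
  replace hpre : ∀ q, q <+: l → -1 ≤ pathHeight q := fun q hq => by
    have := hpre _ (List.cons_prefix_cons.2 ⟨rfl, hq⟩)
    simp only [pathHeight_cons, SStep.ht] at this; omega
  -- `t₁` is the longest prefix of `l` before it first dips below height `0`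
  have hex : ∃ m, pathHeight (l.take (m + 1)) < 0 :=
    ⟨l.length, by rw [List.take_of_length_le (by omega)]; omega⟩
  obtain ⟨m, hbelow, hmin⟩ : ∃ m, pathHeight (l.take (m + 1)) < 0 ∧
      ∀ i < m, ¬ pathHeight (l.take (i + 1)) < 0 :=
    ⟨Nat.find hex, Nat.find_spec hex, fun _ => Nat.find_min hex⟩
  have habove : ∀ i ≤ m, 0 ≤ pathHeight (l.take i) := by
    rintro (_ | i) hi
    · rfl
    · exact not_lt.1 (hmin i (by omega))
  have hm : m < l.length := by
    by_contra! hm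
    have := habove m le_rfl
    rw [List.take_of_length_le hm] at this
    omega
  obtain ⟨e, t₁, t₂, ht₁, hsplit, htake⟩ : ∃ e t₁ t₂, l.take m = t₁ ∧
      l = t₁ ++ e :: t₂ ∧ l.take (m + 1) = t₁ ++ [e] :=
    ⟨l[m], _, l.drop (m + 1), rfl,
      by rw [← List.drop_eq_getElem_cons hm, List.take_append_drop],
      by rw [List.take_add_one, List.getElem?_eq_getElem hm, Option.toList_some]⟩
  have h₁ := habove m le_rfl
  have h₂ := hpre _ (List.take_prefix (m + 1) l)
  rw [ht₁] at h₁
  rw [htake, pathHeight_append] at hbelow h₂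
  have he : e = SStep.D := by
    cases e <;> simp only [pathHeight_cons, pathHeight_nil, SStep.ht] at hbelow h₂ ⊢ <;> omega
  subst he
  have ht₁0 : pathHeight t₁ = 0 := by
    simp only [pathHeight_cons, pathHeight_nil, SStep.ht] at hbelow; omega
  refine ⟨t₁, t₂, hsplit, ⟨ht₁0, fun q hq => ?_⟩, isSchroederPath_iff.2 ⟨?_, fun q hq => ?_⟩⟩
  · rw [← ht₁] at hq
    rw [List.prefix_iff_eq_take.1 (hq.trans (List.take_prefix m l))]
    exact habove _ (hq.length_le.trans (List.length_take_le _ _))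
  · have := congrArg pathHeight hsplit
    simp only [pathHeight_append, pathHeight_cons, SStep.ht, ht₁0, hl] at this; omega
  · have := hpre (t₁ ++ SStep.D :: q) <| by
      rw [hsplit]
      exact (List.prefix_append_right_inj _).2 (List.cons_prefix_cons.2 ⟨rfl, hq⟩)
    simp only [pathHeight_append, pathHeight_cons, SStep.ht, ht₁0] at this; omega

theorem length_le_of_append_D_cons_eq {a₁ a₂ b₁ b₂ : List (SStep k)}
    (h : a₁ ++ SStep.D :: a₂ = b₁ ++ SStep.D :: b₂) (ha : pathHeight a₁ = 0)
    (hb : ∀ q, q <+: b₁ → 0 ≤ pathHeight q) : b₁.length ≤ a₁.length := by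
  by_contra! hlt
  have hprefix : a₁ ++ [SStep.D] <+: b₁ ++ SStep.D :: b₂ := by
    rw [← h]
    exact (List.prefix_append_right_inj a₁).2 (List.cons_prefix_cons.2 ⟨rfl, List.nil_prefix⟩)
  have := hb _ (List.prefix_of_prefix_length_le hprefix (List.prefix_append _ _)
    (by simpa using hlt))
  simp only [pathHeight_append, pathHeight_cons, pathHeight_nil, SStep.ht, ha] at this
  omega

theorem IsSchroederPath.append_D_cons_inj {t₁ t₂ s₁ s₂ : List (SStep k)}
    (ht : IsSchroederPath t₁) (hs : IsSchroederPath s₁)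
    (h : t₁ ++ SStep.D :: t₂ = s₁ ++ SStep.D :: s₂) : t₁ = s₁ ∧ t₂ = s₂ := by
  have hlen := (length_le_of_append_D_cons_eq h ht.1 hs.2).antisymm
    (length_le_of_append_D_cons_eq h.symm hs.1 ht.2)
  obtain ⟨rfl, h'⟩ := List.append_inj h hlen.symm
  exact ⟨rfl, List.cons_injective h'⟩

/-- Derivation trees of the grammar `S ::= ε | L S | U c S D S` of colored Schröder paths. -/
inductive PathTree (k : ℕ) : Type
  | nil : PathTree k
  | level (x : PathTree k) : PathTree k
  | up (c : Fin k) (x₁ x₂ : PathTree k) : PathTree k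

namespace PathTree

def weight : PathTree k → ℕ
  | nil => 0
  | level x => 1 + x.weight
  | up _ x₁ x₂ => 1 + x₁.weight + x₂.weight

def toPath : PathTree k → List (SStep k)
  | nil => []
  | level x => SStep.L :: x.toPath
  | up c x₁ x₂ => SStep.U c :: (x₁.toPath ++ SStep.D :: x₂.toPath)

theorem sum_len_toPath (x : PathTree k) : (x.toPath.map SStep.len).sum = 2 * x.weight := by
  induction x with
  | nil => rfl
  | level x ih =>
    simp only [toPath, weight, List.map_cons, List.sum_cons, SStep.len, ih]
    ring
  | up c x₁ x₂ ih₁ ih₂ =>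
    simp only [toPath, weight, List.map_cons, List.map_append, List.sum_cons, List.sum_append,
      SStep.len, ih₁, ih₂]
    ring

theorem isSchroederPath_toPath (x : PathTree k) : IsSchroederPath x.toPath := by
  induction x with
  | nil => exact isSchroederPath_nil
  | level x ih => exact isSchroederPath_L_cons.2 ih
  | up c x₁ x₂ ih₁ ih₂ => exact ih₁.up c ih₂

theorem toPath_injective : Function.Injective (toPath (k := k)) := by
  intro x y h
  induction x generalizing y with
  | nil => cases y <;> simp [toPath] at h ⊢
  | level x ih =>
    cases y with
    | level y => exact congrArg level (ih (List.cons_injective h))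
    | _ => simp [toPath] at h
  | up c x₁ x₂ ih₁ ih₂ =>
    cases y with
    | up c' y₁ y₂ =>
      simp only [toPath, List.cons.injEq, SStep.U.injEq] at h
      obtain ⟨rfl, h⟩ := h
      obtain ⟨h₁, h₂⟩ :=
        (isSchroederPath_toPath x₁).append_D_cons_inj (isSchroederPath_toPath y₁) h
      rw [ih₁ h₁, ih₂ h₂]
    | _ => simp [toPath] at h

theorem exists_toPath_eq :
    ∀ {l : List (SStep k)}, IsSchroederPath l → ∃ x : PathTree k, x.toPath = l
  | [], _ => ⟨nil, rfl⟩
  | SStep.L :: l, h =>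
    have ⟨x, hx⟩ := exists_toPath_eq (isSchroederPath_L_cons.1 h)
    ⟨level x, by rw [toPath, hx]⟩
  | SStep.D :: l, h => absurd h (not_isSchroederPath_D_cons l)
  | SStep.U c :: l, h => by
    obtain ⟨t₁, t₂, rfl, h₁, h₂⟩ := h.exists_first_return
    obtain ⟨x₁, rfl⟩ := exists_toPath_eq h₁
    obtain ⟨x₂, rfl⟩ := exists_toPath_eq h₂
    exact ⟨up c x₁ x₂, rfl⟩
termination_by l => l.length

theorem range_toPath : Set.range (toPath (k := k)) = {l | IsSchroederPath l} :=
  Set.ext fun l => ⟨by rintro ⟨x, rfl⟩; exact isSchroederPath_toPath x, exists_toPath_eq⟩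

noncomputable def equivSchroederPath : PathTree k ≃ {l : List (SStep k) // IsSchroederPath l} :=
  (Equiv.ofInjective _ toPath_injective).trans (Equiv.setCongr range_toPath)

noncomputable def equivSchroederPathOfWeight (n : ℕ) :
    {x : PathTree k // x.weight = n} ≃
      {p : List (SStep k) // IsSchroederPath p ∧ (p.map SStep.len).sum = 2 * n} :=
  (equivSchroederPath.subtypeEquiv fun x => by
    change _ ↔ (x.toPath.map SStep.len).sum = 2 * n
    rw [sum_len_toPath]
    omega).trans (Equiv.subtypeSubtypeEquivSubtypeInter _ _)

def toCTree : PathTree k → CTree (k + 1)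
  | nil => .nil
  | level x => .node 0 x.toCTree .nil
  | up j x₁ x₂ => .node ((x₂.toCTree.rootColor.getD 0).succAbove j) x₁.toCTree x₂.toCTree

theorem size_toCTree (x : PathTree k) : x.toCTree.size = x.weight := by
  induction x with
  | nil => rfl
  | level x ih => simp [toCTree, CTree.size, weight, ih]
  | up j x₁ x₂ ih₁ ih₂ => simp [toCTree, CTree.size, weight, ih₁, ih₂]

theorem good_toCTree (x : PathTree k) : x.toCTree.Good := by
  induction x with
  | nil => trivial
  | level x ih => exact ⟨nofun, ih, trivial⟩
  | up j x₁ x₂ ih₁ ih₂ =>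
    refine ⟨?_, ih₁, ih₂⟩
    cases x₂.toCTree.rootColor with
    | none => nofun
    | some c => exact fun h => Fin.succAbove_ne c j (Option.some_injective _ h).symm

end PathTree

namespace CTree

def toPathTree : CTree (k + 1) → PathTree k
  | nil => .nil
  | node c l r =>
    match finSuccEquiv' (r.rootColor.getD 0) c with
    | none => .level l.toPathTree
    | some j => .up j l.toPathTree r.toPathTree

theorem Good.toCTree_toPathTree {t : CTree (k + 1)} (ht : t.Good) :
    t.toPathTree.toCTree = t := by
  induction t with
  | nil => rfl
  | node c l r ihl ihr =>
    obtain ⟨hroot, hl, hr⟩ := ht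
    cases hc : finSuccEquiv' (r.rootColor.getD 0) c with
    | none =>
      have hc' : c = r.rootColor.getD 0 :=
        (finSuccEquiv' _).injective (hc.trans (finSuccEquiv'_at _).symm)
      cases r with
      | nil => simp [toPathTree, hc', PathTree.toCTree, ihl hl, rootColor]
      | node c' _ _ => exact (hroot (by rw [hc']; rfl)).elim
    | some j =>
      have hcj : (r.rootColor.getD 0).succAbove j = c := by
        rw [← finSuccEquiv'_symm_some, ← hc, Equiv.symm_apply_apply]
      simp [toPathTree, hc, PathTree.toCTree, ihl hl, ihr hr, hcj]

end CTree

namespace PathTree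

theorem toPathTree_toCTree (x : PathTree k) : x.toCTree.toPathTree = x := by
  induction x with
  | nil => rfl
  | level x ih => simp [toCTree, CTree.toPathTree, CTree.rootColor, finSuccEquiv'_at, ih]
  | up j x₁ x₂ ih₁ ih₂ => simp [toCTree, CTree.toPathTree, finSuccEquiv'_succAbove, ih₁, ih₂]

def equivGoodCTree : PathTree k ≃ {t : CTree (k + 1) // t.Good} where
  toFun x := ⟨x.toCTree, x.good_toCTree⟩
  invFun t := t.1.toPathTree
  left_inv := toPathTree_toCTree
  right_inv t := Subtype.ext t.2.toCTree_toPathTree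

def equivGoodCTreeOfSize (n : ℕ) :
    {x : PathTree k // x.weight = n} ≃ {t : CTree (k + 1) // t.size = n ∧ t.Good} :=
  (equivGoodCTree.subtypeEquiv fun x => by rw [← size_toCTree]; rfl).trans
    ((Equiv.subtypeSubtypeEquivSubtypeInter _ _).trans (Equiv.subtypeEquivRight fun _ => and_comm))

end PathTree

end

/-- There is a bijection between Schröder paths of length `2n` with up-steps
colored by `d−1` colors and binary trees with `n` vertices colored by `d`
colors in which no vertex has a right child of the same color. -/
theorem schroeder_paths_equiv_trees (d n : ℕ) (hd : 1 ≤ d) :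
    Nonempty
      ({p : List (SStep (d - 1)) // IsSchroederPath p ∧ (p.map SStep.len).sum = 2 * n} ≃
       {t : CTree d // t.size = n ∧ t.Good}) := by
  obtain ⟨k, rfl⟩ : ∃ k, d = k + 1 := ⟨d - 1, by omega⟩
  exact ⟨(PathTree.equivSchroederPathOfWeight n).symm.trans (PathTree.equivGoodCTreeOfSize n)⟩
end

section
/- Let f_2 = 1 + 2x(1−3x+3x²)²/((1−x)(1−2x)⁴). Then the coefficient of x^n in f_2 equals 2 + ((n−1)(n²+n+42)/3)·2^(n−4) for all n ≥ 1, and equals 1 for n = 0. -/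
/-!
For `n ≥ 1` the claimed coefficient is `2 · 1ⁿ + q(n) · 2ⁿ` with `q` a cubic, so it satisfies the
linear recurrence whose characteristic polynomial is the reversal of `(1 - x)(1 - 2x)⁴`. Hence
multiplying the series of claimed coefficients by `(1 - x)(1 - 2x)⁴` kills every coefficient from
`x⁶` on, and the first six coefficients are compared directly.
-/

open PowerSeries

theorem mul_denom_eq (g : PowerSeries ℚ) :
    g * ((1 - X) * (1 - 2 * X) ^ 4) = g - C 9 * (g * X ^ 1) + C 32 * (g * X ^ 2)
      - C 56 * (g * X ^ 3) + C 48 * (g * X ^ 4) - C 16 * (g * X ^ 5) := by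
  simp only [map_ofNat]; ring

theorem denom_add_numer_eq :
    ((1 - X) * (1 - 2 * X) ^ 4 + 2 * X * (1 - 3 * X + 3 * X ^ 2) ^ 2 : PowerSeries ℚ) =
      1 - C 7 * X ^ 1 + C 20 * X ^ 2 - C 26 * X ^ 3 + C 12 * X ^ 4 + C 2 * X ^ 5 := by
  simp only [map_ofNat]; ring

theorem coeff_add_five_mul_denom (g : PowerSeries ℚ) (n : ℕ) :
    coeff (n + 5) (g * ((1 - X) * (1 - 2 * X) ^ 4)) =
      coeff (n + 5) g - 9 * coeff (n + 4) g + 32 * coeff (n + 3) g - 56 * coeff (n + 2) g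
        + 48 * coeff (n + 1) g - 16 * coeff n g := by
  simp [mul_denom_eq, coeff_mul_X_pow']

theorem coeff_add_six_denom_add_numer (n : ℕ) :
    coeff (n + 6)
      ((1 - X) * (1 - 2 * X) ^ 4 + 2 * X * (1 - 3 * X + 3 * X ^ 2) ^ 2 : PowerSeries ℚ) = 0 := by
  simp [denom_add_numer_eq, coeff_X_pow, coeff_one]

def boundaryClosedForm (n : ℕ) : ℚ :=
  2 + (((n : ℚ) - 1) * ((n : ℚ) ^ 2 + n + 42) / 3) * (2 : ℚ) ^ ((n : ℤ) - 4)

theorem boundaryClosedForm_recurrence (n : ℕ) :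
    boundaryClosedForm (n + 5) - 9 * boundaryClosedForm (n + 4) + 32 * boundaryClosedForm (n + 3)
      - 56 * boundaryClosedForm (n + 2) + 48 * boundaryClosedForm (n + 1)
      - 16 * boundaryClosedForm n = 0 := by
  have hpow (k : ℕ) : (2 : ℚ) ^ (((n + k : ℕ) : ℤ) - 4) = 2 ^ k * 2 ^ ((n : ℤ) - 4) := by
    rw [← zpow_natCast, ← zpow_add₀ two_ne_zero]
    congr 1
    push_cast
    ring
  simp only [boundaryClosedForm, hpow]
  push_cast
  ring

/-- The closed form gives `9/8` at `n = 0`, so the constant term is set separately. -/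
noncomputable def boundarySeries : PowerSeries ℚ :=
  mk fun n => if n = 0 then 1 else boundaryClosedForm n

theorem boundarySeries_mul_denom :
    boundarySeries * ((1 - X) * (1 - 2 * X) ^ 4) =
      (1 - X) * (1 - 2 * X) ^ 4 + 2 * X * (1 - 3 * X + 3 * X ^ 2) ^ 2 := by
  ext m
  rcases lt_or_ge m 6 with hm | hm
  · rw [mul_denom_eq, denom_add_numer_eq]
    interval_cases m <;>
      norm_num [coeff_mul_X_pow', coeff_X_pow, boundarySeries, boundaryClosedForm]
  · obtain ⟨n, rfl⟩ := Nat.exists_eq_add_of_le' hm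
    rw [coeff_add_six_denom_add_numer, show n + 6 = n + 1 + 5 by ring, coeff_add_five_mul_denom]
    simp only [boundarySeries, coeff_mk, Nat.add_eq_zero_iff, one_ne_zero, and_false, if_false]
    simpa [add_assoc] using boundaryClosedForm_recurrence (n + 1)

theorem boundarySeries_eq :
    boundarySeries = 1 + 2 * X * (1 - 3 * X + 3 * X ^ 2) ^ 2 * ((1 - X) * (1 - 2 * X) ^ 4)⁻¹ := by
  have hD : constantCoeff ((1 - X) * (1 - 2 * X) ^ 4 : PowerSeries ℚ) ≠ 0 := by simp
  rw [(eq_mul_inv_iff_mul_eq hD).2 boundarySeries_mul_denom, add_mul,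
    PowerSeries.mul_inv_cancel _ hD]

open PowerSeries in
/-- Coefficients of `f = 1 + 2x(1−3x+3x²)²/((1−x)(1−2x)⁴)`: the constant term
is `1`, and for `n ≥ 1` the coefficient of `xⁿ` equals
`2 + ((n−1)(n²+n+42)/3)·2^(n−4)` (with an integer power of `2`). -/
theorem boundary_planar_coeff (f : PowerSeries ℚ)
    (hf : f = 1 + 2 * X * (1 - 3 * X + 3 * X ^ 2) ^ 2 *
      ((1 - X) * (1 - 2 * X) ^ 4)⁻¹) :
    coeff 0 f = 1 ∧
      ∀ n : ℕ, 1 ≤ n → coeff n f =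
        2 + (((n : ℚ) - 1) * ((n : ℚ) ^ 2 + n + 42) / 3) * (2 : ℚ) ^ ((n : ℤ) - 4) := by
  rw [hf, ← boundarySeries_eq]
  refine ⟨by simp [boundarySeries], fun n hn => ?_⟩
  simp [boundarySeries, boundaryClosedForm, Nat.one_le_iff_ne_zero.mp hn]
end

section
/- The formal power series f satisfying f = 1 + x f + (d−1) x f² with f(0) = 1 also satisfies f = (1 + ((d−1)/d)(f−1)) · 1/(1 − x(1 + ((d−1)/d)(f−1))), as an identity of formal power series. -/
namespace PowerSeries

variable {R : Type*} [CommRing R]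

theorem mul_one_sub_X_mul_eq_of_eq_one_add_X_mul_add_X_mul_sq {c e : R} (hc : c * (e + 1) = e)
    {f : R⟦X⟧} (hf : f = 1 + X * f + C e * X * f ^ 2) :
    f * (1 - X * (1 + C c * (f - 1))) = 1 + C c * (f - 1) := by
  have hC : C c * C e + C c = C e := by simpa [mul_add] using congrArg (C (R := R)) hc
  -- subtracting `(1 - c)` times `hf` leaves `X f² (c (e + 1) - e)`
  linear_combination (1 - C c) * hf - X * f ^ 2 * hC

end PowerSeries

open PowerSeries in
theorem guillotine_gf_eq'_general (d : ℕ) (hd : 2 ≤ d) (f : PowerSeries ℚ)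
    (hf : f = 1 + X * f + C ((d : ℚ) - 1) * X * f ^ 2) :
    f = (1 + C (((d : ℚ) - 1) / d) * (f - 1)) *
          (1 - X * (1 + C (((d : ℚ) - 1) / d) * (f - 1)))⁻¹ := by
  have hd0 : (d : ℚ) ≠ 0 := Nat.cast_ne_zero.mpr (by omega)
  rw [eq_mul_inv_iff_mul_eq (by simp)]
  exact mul_one_sub_X_mul_eq_of_eq_one_add_X_mul_add_X_mul_sq (by field_simp; ring) hf

open PowerSeries in
/-- The power series `f` with `f = 1 + x f + (d−1) x f²`, `f(0)=1`, satisfies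
`f = (1 + ((d−1)/d)(f−1)) · (1 − x(1 + ((d−1)/d)(f−1)))⁻¹`. -/
theorem guillotine_gf_eq' (d : ℕ) (hd : 2 ≤ d) (f : PowerSeries ℚ)
    (hf0 : constantCoeff f = 1)
    (hf : f = 1 + X * f + C ((d : ℚ) - 1) * X * f ^ 2) :
    f = (1 + C (((d : ℚ) - 1) / d) * (f - 1)) *
          (1 - X * (1 + C (((d : ℚ) - 1) / d) * (f - 1)))⁻¹ :=
  guillotine_gf_eq'_general d hd f hf
end

section
/- For fixed d ≥ 2, the number of 2-alternating guillotine partitions of a d-box by n cuts is d·(d−1)^(n−1)·C_n for n ≥ 1, where C_n is the n-th Catalan number. Equivalently: the number of binary trees with n vertices colored by {1,...,d} in which no child (left or right) has the same color as its parent equals d·(d−1)^(n−1)·C_n. -/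
namespace CTree

/-- No child (left or right) has the same color as its parent. -/
def ProperColored {d : ℕ} : CTree d → Prop
  | nil => True
  | node c l r => rootColor l ≠ some c ∧ rootColor r ≠ some c ∧
      ProperColored l ∧ ProperColored r

end CTree

/-!
Separate a colored tree into its uncolored shape and its coloring. A proper coloring of a
shape is chosen top-down: `d` colors for the root, then `d - 1` for every other vertex, which
only has to avoid the color of its parent. So each shape with `n ≥ 1` vertices carries
`d (d - 1)^(n - 1)` proper colorings, and there are `catalan n` shapes.
-/

open BinaryTree

namespace CTree

variable {d : ℕ}

def shape : CTree d → BinaryTree Unit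
  | nil => .nil
  | node _ l r => l.shape △ r.shape

theorem numNodes_shape (t : CTree d) : t.shape.numNodes = t.size := by
  induction t with
  | nil => rfl
  | node _ l r ihl ihr => simp only [shape, size, numNodes, ihl, ihr]; omega

/-- Proper colorings of the shape `s` whose root color satisfies `p`; with `p = (· ≠ c)` these
are the subtrees that may hang below a vertex of color `c`. -/
def ProperColoring (d : ℕ) (s : BinaryTree Unit) (p : Fin d → Prop) : Type :=
  {t : CTree d // t.shape = s ∧ t.ProperColored ∧ ∀ c ∈ t.rootColor, p c}

instance (p : Fin d → Prop) : Unique (ProperColoring d .nil p) where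
  default := ⟨nil, rfl, trivial, by simp [rootColor]⟩
  uniq := by
    rintro ⟨_ | _, ht, _⟩
    · rfl
    · simp [shape] at ht

noncomputable def properColoringNodeEquiv (p : Fin d → Prop) (l r : BinaryTree Unit) :
    (Σ c : {c // p c}, ProperColoring d l (· ≠ c) × ProperColoring d r (· ≠ c)) ≃
      ProperColoring d (l △ r) p :=
  Equiv.ofBijective
    (fun ⟨c, tl, tr⟩ => ⟨node c tl.1 tr.1, by simp [shape, tl.2.1, tr.2.1],
      ⟨fun h => tl.2.2.2 _ h rfl, fun h => tr.2.2.2 _ h rfl, tl.2.2.1, tr.2.2.1⟩,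
      by rintro _ ⟨⟩; exact c.2⟩)
    ⟨by
      rintro ⟨c, ⟨tl, _⟩, ⟨tr, _⟩⟩ ⟨c', ⟨tl', _⟩, ⟨tr', _⟩⟩ h
      have h' : node c.1 tl tr = node c'.1 tl' tr' := congrArg Subtype.val h
      obtain ⟨hc, rfl, rfl⟩ := node.inj h'
      obtain rfl := Subtype.ext hc
      rfl,
    by
      rintro ⟨_ | ⟨c, tl, tr⟩, hs, hp, hc⟩
      · simp [shape] at hs
      · simp only [shape, BinaryTree.node.injEq, true_and] at hs
        obtain ⟨hlc, hrc, hlp, hrp⟩ := hp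
        exact ⟨⟨⟨c, hc c rfl⟩, ⟨tl, hs.1, hlp, by rintro _ h rfl; exact hlc h⟩,
          ⟨tr, hs.2, hrp, by rintro _ h rfl; exact hrc h⟩⟩, rfl⟩⟩

instance (s : BinaryTree Unit) (p : Fin d → Prop) : Finite (ProperColoring d s p) := by
  induction s using unitRecOn generalizing p with
  | base => infer_instance
  | ind l r _ _ => exact Finite.of_equiv _ (properColoringNodeEquiv p l r)

theorem card_properColoring_node (p : Fin d → Prop) [DecidablePred p] (l r : BinaryTree Unit) :
    Nat.card (ProperColoring d (l △ r) p) =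
      ∑ c : {c // p c}, Nat.card (ProperColoring d l (· ≠ c)) *
        Nat.card (ProperColoring d r (· ≠ c)) := by
  rw [← Nat.card_congr (properColoringNodeEquiv p l r), Nat.card_sigma]
  simp only [Nat.card_prod]

theorem card_properColoring_ne (s : BinaryTree Unit) (c : Fin d) :
    Nat.card (ProperColoring d s (· ≠ c)) = (d - 1) ^ s.numNodes := by
  induction s using unitRecOn generalizing c with
  | base => exact Nat.card_unique
  | ind l r ihl ihr =>
    rw [card_properColoring_node]
    simp [ihl, ihr, Fintype.card_subtype_compl, pow_add, mul_comm]

theorem card_properColoring_of_numNodes_eq_succ {s : BinaryTree Unit} {m : ℕ}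
    (hs : s.numNodes = m + 1) :
    Nat.card (ProperColoring d s fun _ => True) = d * (d - 1) ^ m := by
  cases s with
  | nil => simp at hs
  | node _ l r =>
    rw [card_properColoring_node]
    simp only [numNodes] at hs
    simp [card_properColoring_ne, ← pow_add, show l.numNodes + r.numNodes = m by omega]

def properColoredEquivSigmaShape (n : ℕ) :
    {t : CTree d // t.size = n ∧ t.ProperColored} ≃
      Σ s : treesOfNumNodesEq n, ProperColoring d s fun _ => True where
  toFun t := ⟨⟨t.1.shape, by simp [numNodes_shape, t.2.1]⟩, t.1, rfl, t.2.2, fun _ _ => trivial⟩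
  invFun x := ⟨x.2.1, by rw [← numNodes_shape, x.2.2.1]; exact mem_treesOfNumNodesEq.1 x.1.2,
    x.2.2.2.1⟩
  left_inv _ := rfl
  right_inv x := Sigma.subtype_ext (Subtype.ext x.2.2.1) rfl

theorem card_properColored_eq_sum (n : ℕ) :
    Nat.card {t : CTree d // t.size = n ∧ t.ProperColored} =
      ∑ s ∈ treesOfNumNodesEq n, Nat.card (ProperColoring d s fun _ => True) := by
  rw [Nat.card_congr (properColoredEquivSigmaShape n), Nat.card_sigma]
  exact Finset.sum_coe_sort _ fun s => Nat.card (ProperColoring d s fun _ => True)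

end CTree

theorem card_alternating_trees_general (d n : ℕ) (hn : 1 ≤ n) :
    Nat.card {t : CTree d // t.size = n ∧ t.ProperColored} =
      d * (d - 1) ^ (n - 1) * catalan n := by
  obtain ⟨m, rfl⟩ : ∃ m, n = m + 1 := ⟨n - 1, by omega⟩
  rw [CTree.card_properColored_eq_sum, Finset.sum_congr rfl fun s hs =>
      CTree.card_properColoring_of_numNodes_eq_succ (mem_treesOfNumNodesEq.1 hs),
    Finset.sum_const, treesOfNumNodesEq_card_eq_catalan, smul_eq_mul, Nat.add_sub_cancel,
    mul_comm]

/-- The number of 2-alternating guillotine partitions of a d-box by `n ≥ 1`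
cuts — equivalently, the number of binary trees with `n` vertices colored by
`d` colors in which no child has the same color as its parent — is
`d·(d−1)^(n−1)·Cₙ`. -/
theorem card_alternating_trees (d n : ℕ) (hd : 2 ≤ d) (hn : 1 ≤ n) :
    Nat.card {t : CTree d // t.size = n ∧ t.ProperColored} =
      d * (d - 1) ^ (n - 1) * catalan n :=
  card_alternating_trees_general d n hn
end

section
/- Let h be the formal power series over ℚ satisfying h = x(1−x)/(2(1−x)² − 1), and let f = (1−2x)/(1−4x+2x²). Then h = x/(1−x) + h·(1/(1−x)² − 1) holds as a formal power series identity, and f = (1−2x)/(1−4x+2x²) has coefficients 1, 2, 6, 20, 68, 232, 792, 2704, 9232, 31520 for n = 0,...,9. -/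
open PowerSeries in
/-- For `h = x(1−x)/(2(1−x)²−1)` and `f = (1−2x)/(1−4x+2x²)` we have the
identity `h = x/(1−x) + h·(1/(1−x)² − 1)`, and the coefficients of `f` for
`n = 0, …, 9` are `1, 2, 6, 20, 68, 232, 792, 2704, 9232, 31520`. -/
theorem wincc_gf (h f : PowerSeries ℚ)
    (hh : h = X * (1 - X) * (2 * (1 - X) ^ 2 - 1)⁻¹)
    (hf : f = (1 - 2 * X) * (1 - 4 * X + 2 * X ^ 2)⁻¹) :
    h = X * (1 - X)⁻¹ + h * (((1 - X) ^ 2)⁻¹ - 1) ∧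
    coeff 0 f = 1 ∧ coeff 1 f = 2 ∧ coeff 2 f = 6 ∧ coeff 3 f = 20 ∧
    coeff 4 f = 68 ∧ coeff 5 f = 232 ∧ coeff 6 f = 792 ∧
    coeff 7 f = 2704 ∧ coeff 8 f = 9232 ∧ coeff 9 f = 31520 := by
  have h1 : (2 * (1 - X) ^ 2 - 1 : ℚ⟦X⟧)⁻¹ * (2 * (1 - X) ^ 2 - 1) = 1 :=
    PowerSeries.inv_mul_cancel _ (by norm_num [map_ofNat])
  have h2 : (1 - X : ℚ⟦X⟧)⁻¹ * (1 - X) = 1 :=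
    PowerSeries.inv_mul_cancel _ (by simp)
  have h3 : (((1 - X) ^ 2 : ℚ⟦X⟧))⁻¹ * ((1 - X) ^ 2) = 1 :=
    PowerSeries.inv_mul_cancel _ (by simp)
  have hw : constantCoeff (1 - 4 * X + 2 * X ^ 2 : ℚ⟦X⟧) ≠ 0 := by simp
  have hf2 : f * (1 - 4 * X + 2 * X ^ 2) = 1 - 2 * X := by
    rw [hf, mul_assoc, PowerSeries.inv_mul_cancel _ hw, mul_one]
  have key : f - (4:ℚ) • (f * X ^ 1) + (2:ℚ) • (f * X ^ 2) = 1 - (2:ℚ) • X ^ 1 := by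
    simp only [smul_eq_C_mul, map_ofNat]; linear_combination hf2
  have e0 := congrArg (coeff 0) key
  have e1 := congrArg (coeff 1) key
  have e2 := congrArg (coeff 2) key
  have e3 := congrArg (coeff 3) key
  have e4 := congrArg (coeff 4) key
  have e5 := congrArg (coeff 5) key
  have e6 := congrArg (coeff 6) key
  have e7 := congrArg (coeff 7) key
  have e8 := congrArg (coeff 8) key
  have e9 := congrArg (coeff 9) key
  simp only [map_add, map_sub, map_smul, coeff_mul_X_pow', coeff_one, coeff_X_pow,
    smul_eq_mul] at e0 e1 e2 e3 e4 e5 e6 e7 e8 e9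
  norm_num at e0 e1 e2 e3 e4 e5 e6 e7 e8 e9
  refine ⟨?_, by rw [coeff_zero_eq_constantCoeff]; linarith, by linarith, by linarith, by linarith, by linarith,
    by linarith, by linarith, by linarith, by linarith, by linarith⟩
  have hc : ((1 - X) ^ 2 * (2 * (1 - X) ^ 2 - 1) : ℚ⟦X⟧) ≠ 0 := fun heq => by
    have := congrArg constantCoeff heq; simp [map_ofNat] at this; norm_num at this
  refine mul_right_cancel₀ hc ?_
  rw [hh]
  linear_combination (2 * X * (1 - X) ^ 3 - X * (1 - X)) * h1
    - X * (1 - X) * (2 * (1 - X) ^ 2 - 1) * h2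
    - X * (1 - X) * ((2 * (1 - X) ^ 2 - 1 : ℚ⟦X⟧)⁻¹ * (2 * (1 - X) ^ 2 - 1)) * h3
end

section
/- Let d ≥ 2 and let f_d be the generating function of boundary guillotine partitions given by the nested formula f = 1 + (dx(1−x)/(1−x)²)(1 + ((d−1)x(1−x)/(1−2x)²)(⋯(1 + (x(1−x)/(1−dx)²))²⋯)²)². Then [x^n] f_d ∼ ((d−1)/d)^(2^d − 1) · n^(2^d − 1)/(2^d − 1)! · d^n as n → ∞. -/
open PowerSeries

/-- `boundaryAux d k` is the series `g_{d−k}` in the nested formula for the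
generating function of boundary guillotine partitions of a d-box:
`g_d = 1/(1−dx)` and `g_i = (1/(1−ix))·(1 + (d−i)x(1−x)·g_{i+1}²)`. -/
noncomputable def boundaryAux (d : ℕ) : ℕ → PowerSeries ℝ
  | 0 => (1 - (d : PowerSeries ℝ) * X)⁻¹
  | k + 1 => (1 - ((d - (k + 1) : ℕ) : PowerSeries ℝ) * X)⁻¹ *
      (1 + ((k + 1 : ℕ) : PowerSeries ℝ) * X * (1 - X) * (boundaryAux d k) ^ 2)

/-- The generating function `f_d = 1 + d·x(1−x)·g_1²` of boundary guillotine
partitions of a d-box. -/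
noncomputable def boundaryGF (d : ℕ) : PowerSeries ℝ :=
  1 + (d : PowerSeries ℝ) * X * (1 - X) * (boundaryAux d (d - 1)) ^ 2


/-!
Substituting `x ↦ x/d` turns `1/(1 - dx)` into `1/(1 - x)` and every other factor `1/(1 - ix)`
into a geometric series of ratio `i/d < 1`. Say that `F` has a dominant pole of order `e + 1` and
weight `c` if `[xⁿ]F = c·C(n+e, e) + o(nᵉ)`. Such poles multiply, orders adding, because a Cauchy
product of `O(nᵖ)` and `o(n^q)` is `o(n^(p+q+1))`; they survive multiplication by `x`, by
constants, and by `1/(1 - rx)` with `|r| < 1`, which divides the weight by `1 - r` (dominated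
convergence). Each level of the nested formula squares `g`, so `g_{d-k}` has a pole of order `2^k`
and weight `((d-1)/d)^(2^k-1)`, and `f_d` one of order `2^d`; finally `C(n+e, e) ∼ nᵉ/e!`.
-/

open Filter Asymptotics Finset Topology

lemma isBigO_natCast_add_one_pow (m : ℕ) :
    (fun n : ℕ => ((n : ℝ) + 1) ^ m) =O[atTop] fun n => (n : ℝ) ^ m := by
  refine IsBigO.pow ?_ m
  refine IsBigO.of_bound 2 ?_
  filter_upwards [eventually_ge_atTop 1] with n hn
  have : (1 : ℝ) ≤ n := by exact_mod_cast hn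
  rw [Real.norm_of_nonneg (by positivity), Real.norm_of_nonneg (by positivity)]
  linarith

lemma isBigO_natCast_pow_add_one (m : ℕ) :
    (fun n : ℕ => (n : ℝ) ^ m) =O[atTop] fun n => ((n : ℝ) + 1) ^ m :=
  IsBigO.of_bound 1 <| Eventually.of_forall fun n => by
    rw [one_mul, Real.norm_of_nonneg (by positivity), Real.norm_of_nonneg (by positivity)]
    gcongr
    linarith

lemma coeff_invOneSubPow_succ (e n : ℕ) :
    coeff n (invOneSubPow ℝ (e + 1) : ℝ⟦X⟧) = ((e + n).choose e : ℝ) := by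
  simp [invOneSubPow_val_succ_eq_mk_add_choose]

lemma one_sub_X_mul_invOneSubPow_succ (e : ℕ) :
    (1 - X : ℝ⟦X⟧) * (invOneSubPow ℝ (e + 1) : ℝ⟦X⟧) = invOneSubPow ℝ e := by
  simpa using one_sub_pow_mul_invOneSubPow_val_add_eq_invOneSubPow_val ℝ e 1

lemma isEquivalent_coeff_invOneSubPow (e : ℕ) :
    (fun n => coeff n (invOneSubPow ℝ (e + 1) : ℝ⟦X⟧)) ~[atTop]
      fun n => (n : ℝ) ^ e / e.factorial := by
  have hshift : (fun n : ℕ => ((n + e : ℕ) : ℝ)) ~[atTop] fun n => (n : ℝ) := by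
    simp only [Nat.cast_add]
    refine IsEquivalent.refl.add_isLittleO ?_
    exact isLittleO_const_left.2 <| Or.inr <| tendsto_norm_atTop_atTop.comp
      tendsto_natCast_atTop_atTop
  have hchoose : (fun n : ℕ => ((n + e).choose e : ℝ)) ~[atTop]
      fun n => ((n + e : ℕ) : ℝ) ^ e / e.factorial :=
    (isEquivalent_choose e).comp_tendsto (tendsto_add_atTop_nat e)
  have hpow : (fun n : ℕ => ((n + e : ℕ) : ℝ) ^ e / e.factorial) ~[atTop]
      fun n => (n : ℝ) ^ e / e.factorial :=
    (hshift.pow e).div IsEquivalent.refl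
  refine (hchoose.trans hpow).congr_left (Eventually.of_forall fun n => ?_)
  simp only [coeff_invOneSubPow_succ, add_comm]

lemma isBigO_coeff_invOneSubPow (e : ℕ) :
    (fun n => coeff n (invOneSubPow ℝ (e + 1) : ℝ⟦X⟧)) =O[atTop] fun n => (n : ℝ) ^ e := by
  refine (isEquivalent_coeff_invOneSubPow e).isBigO.trans ?_
  simpa only [div_eq_mul_inv, mul_comm _ (_⁻¹ : ℝ)] using
    (isBigO_refl (fun n : ℕ => (n : ℝ) ^ e) atTop).const_mul_left ((e.factorial : ℝ)⁻¹)

lemma isLittleO_coeff_one (e : ℕ) :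
    (fun n => coeff n (1 : ℝ⟦X⟧)) =o[atTop] fun n => (n : ℝ) ^ e :=
  (isLittleO_zero _ _).congr' (by
    filter_upwards [eventually_ne_atTop 0] with n hn
    simp [coeff_one, hn]) EventuallyEq.rfl

lemma isLittleO_coeff_invOneSubPow (e : ℕ) :
    (fun n => coeff n (invOneSubPow ℝ e : ℝ⟦X⟧)) =o[atTop] fun n => (n : ℝ) ^ e := by
  cases e with
  | zero => simpa [invOneSubPow_zero] using isLittleO_coeff_one 0
  | succ e =>
    exact (isBigO_coeff_invOneSubPow e).trans_isLittleO <|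
      (isLittleO_pow_pow_atTop_of_lt e.lt_succ_self).comp_tendsto tendsto_natCast_atTop_atTop

lemma exists_abs_le_mul_add_one_pow {a : ℕ → ℝ} {p : ℕ}
    (h : a =O[atTop] fun n => (n : ℝ) ^ p) : ∃ K, ∀ n, |a n| ≤ K * ((n : ℝ) + 1) ^ p := by
  obtain ⟨K, hK⟩ := (isBigO_nat_atTop_iff fun n hn => absurd hn (by positivity)).1
    (h.trans (isBigO_natCast_pow_add_one p))
  refine ⟨K, fun n => ?_⟩
  simpa [abs_of_nonneg (by positivity : (0 : ℝ) ≤ (n : ℝ) + 1)] using hK n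

lemma coeff_mul_eq_sum_range (F G : ℝ⟦X⟧) (n : ℕ) :
    coeff n (F * G) = ∑ k ∈ range (n + 1), coeff k F * coeff (n - k) G := by
  rw [coeff_mul, Finset.Nat.sum_antidiagonal_eq_sum_range_succ_mk]

lemma isLittleO_sum_range_succ_abs {b : ℕ → ℝ} {q : ℕ}
    (h : b =o[atTop] fun n => (n : ℝ) ^ q) :
    (fun n => ∑ j ∈ range (n + 1), |b j|) =o[atTop] fun n => ((n : ℝ) + 1) ^ (q + 1) := by
  have hdiv : Tendsto (fun n => ∑ j ∈ range n, ((j : ℝ) + 1) ^ q) atTop atTop := by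
    refine tendsto_atTop_mono (fun n => ?_) tendsto_natCast_atTop_atTop
    calc (n : ℝ) = ∑ _j ∈ range n, (1 : ℝ) := by simp
      _ ≤ ∑ j ∈ range n, ((j : ℝ) + 1) ^ q :=
          sum_le_sum fun j _ => one_le_pow₀ (by linarith [(j.cast_nonneg : (0 : ℝ) ≤ j)])
  refine (((h.trans_isBigO (isBigO_natCast_pow_add_one q)).norm_left.sum_range
    (fun j => by positivity) hdiv).comp_tendsto (tendsto_add_atTop_nat 1)).trans_isBigO
    (IsBigO.of_bound 1 (Eventually.of_forall fun n => ?_))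
  simp only [Function.comp_apply, one_mul]
  rw [Real.norm_of_nonneg (by positivity), Real.norm_of_nonneg (by positivity)]
  calc ∑ j ∈ range (n + 1), ((j : ℝ) + 1) ^ q ≤ ∑ _j ∈ range (n + 1), ((n : ℝ) + 1) ^ q :=
        sum_le_sum fun j hj => by gcongr; exact_mod_cast Nat.lt_succ_iff.1 (mem_range.1 hj)
    _ = ((n : ℝ) + 1) ^ (q + 1) := by simp [pow_succ, mul_comm]

theorem isLittleO_coeff_mul {p q : ℕ} {F G : ℝ⟦X⟧}
    (hF : (fun n => coeff n F) =O[atTop] fun n => (n : ℝ) ^ p)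
    (hG : (fun n => coeff n G) =o[atTop] fun n => (n : ℝ) ^ q) :
    (fun n => coeff n (F * G)) =o[atTop] fun n => (n : ℝ) ^ (p + q + 1) := by
  obtain ⟨K, hK⟩ := exists_abs_le_mul_add_one_pow hF
  have hK0 : 0 ≤ K := by simpa using (abs_nonneg _).trans (hK 0)
  set S : ℕ → ℝ := fun n => ∑ j ∈ range (n + 1), |coeff j G|
  have hbound : ∀ n, |coeff n (G * F)| ≤ K * (((n : ℝ) + 1) ^ p * S n) := by
    intro n
    rw [coeff_mul_eq_sum_range, mul_sum, mul_sum]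
    refine (abs_sum_le_sum_abs _ _).trans (sum_le_sum fun k _ => ?_)
    have hpow : ((n - k : ℕ) : ℝ) + 1 ≤ (n : ℝ) + 1 := by gcongr; exact_mod_cast Nat.sub_le n k
    calc |coeff k G * coeff (n - k) F| ≤ |coeff k G| * (K * (((n - k : ℕ) : ℝ) + 1) ^ p) := by
          rw [abs_mul]; gcongr; exact hK _
      _ ≤ K * (((n : ℝ) + 1) ^ p * |coeff k G|) := by
          rw [mul_left_comm, mul_comm (|coeff k G|)]; gcongr
  have hprod : (fun n : ℕ => ((n : ℝ) + 1) ^ p * S n) =o[atTop]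
      fun n => ((n : ℝ) + 1) ^ (p + q + 1) := by
    simpa only [← pow_add, add_assoc] using
      (isBigO_refl (fun n : ℕ => ((n : ℝ) + 1) ^ p) atTop).mul_isLittleO
        (isLittleO_sum_range_succ_abs hG)
  simp_rw [mul_comm F G]
  refine (IsBigO.of_bound K (Eventually.of_forall fun n => ?_)).trans_isLittleO
    (hprod.trans_isBigO (isBigO_natCast_add_one_pow _))
  rw [Real.norm_eq_abs, Real.norm_of_nonneg (by positivity)]
  exact hbound n

theorem isLittleO_coeff_mul_of_summable {q : ℕ} {F G : ℝ⟦X⟧}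
    (hF : Summable fun n => |coeff n F|)
    (hG : (fun n => coeff n G) =o[atTop] fun n => (n : ℝ) ^ q) :
    (fun n => coeff n (F * G)) =o[atTop] fun n => (n : ℝ) ^ q := by
  set w : ℕ → ℝ := fun n => ((n : ℝ) + 1) ^ q
  have hw : ∀ n, 0 < w n := fun n => by positivity
  obtain ⟨M, hM⟩ := exists_abs_le_mul_add_one_pow hG.isBigO
  have hGw : Tendsto (fun n => coeff n G / w n) atTop (𝓝 0) :=
    (hG.trans_isBigO (isBigO_natCast_pow_add_one q)).tendsto_div_nhds_zero
  set f : ℕ → ℕ → ℝ := fun n k => if k ≤ n then coeff k F * (coeff (n - k) G / w n) else 0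
  have hf : ∀ n k, |f n k| ≤ |coeff k F| * |coeff (n - k) G / w (n - k)| := by
    intro n k
    by_cases hk : k ≤ n
    · simp only [f, if_pos hk, abs_mul, abs_div, abs_of_pos (hw _)]
      gcongr
      simp only [w]; gcongr; exact_mod_cast Nat.sub_le n k
    · simp only [f, if_neg hk, abs_zero]; positivity
  have hsum : ∀ n, coeff n (F * G) / w n = ∑' k, f n k := by
    intro n
    rw [tsum_eq_sum (s := range (n + 1)) fun k hk => if_neg (by simpa using hk),
      coeff_mul_eq_sum_range, sum_div]
    refine sum_congr rfl fun k hk => ?_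
    rw [if_pos (Nat.lt_succ_iff.1 (mem_range.1 hk)), mul_div_assoc]
  refine IsLittleO.trans_isBigO ?_ (isBigO_natCast_add_one_pow q)
  rw [isLittleO_iff_tendsto fun n hn => absurd hn (hw n).ne']
  simp_rw [hsum]
  have hlim := tendsto_tsum_of_dominated_convergence (f := f) (g := fun _ => 0) (hF.mul_right M)
    (fun k => squeeze_zero_norm (hf · k) <| by
      simpa using (hGw.comp (tendsto_sub_atTop_nat k)).abs.const_mul |coeff k F|)
    (Eventually.of_forall fun n k => (hf n k).trans <| by
      gcongr
      rw [abs_div, abs_of_pos (hw _), div_le_iff₀ (hw _)]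
      exact hM _)
  simpa using hlim

namespace PowerSeries

variable {k : Type*} [Field k]

lemma rescale_inv (a : k) (φ : k⟦X⟧) : rescale a φ⁻¹ = (rescale a φ)⁻¹ := by
  have hconst : constantCoeff (rescale a φ) = constantCoeff φ := by
    rw [← coeff_zero_eq_constantCoeff_apply, ← coeff_zero_eq_constantCoeff_apply, coeff_rescale,
      pow_zero, one_mul]
  by_cases hφ : constantCoeff φ = 0
  · rw [PowerSeries.inv_eq_zero.2 hφ, PowerSeries.inv_eq_zero.2 (hconst.trans hφ), map_zero]
  · rw [eq_inv_iff_mul_eq_one (hconst ▸ hφ), ← map_mul, PowerSeries.inv_mul_cancel _ hφ, map_one]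

lemma inv_one_sub_X : ((1 - X)⁻¹ : k⟦X⟧) = invOneSubPow k 1 := by
  rw [inv_eq_iff_mul_eq_one (by simp)]
  have := (invOneSubPow k 1).val_inv
  rwa [invOneSubPow_inv_eq_one_sub_pow, pow_one] at this

lemma inv_one_sub_C_mul_X (r : k) : (1 - C r * X)⁻¹ = rescale r (invOneSubPow k 1 : k⟦X⟧) := by
  rw [← inv_one_sub_X, rescale_inv, map_sub, map_one, rescale_X]

lemma coeff_inv_one_sub_C_mul_X (r : k) (n : ℕ) : coeff n (1 - C r * X)⁻¹ = r ^ n := by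
  simp [inv_one_sub_C_mul_X, invOneSubPow_val_succ_eq_mk_add_choose]

end PowerSeries

lemma isLittleO_coeff_X_mul {e : ℕ} {H : ℝ⟦X⟧}
    (h : (fun n => coeff n H) =o[atTop] fun n => (n : ℝ) ^ e) :
    (fun n => coeff n (X * H)) =o[atTop] fun n => (n : ℝ) ^ e := by
  have hshift : (fun n => coeff n (X * H)) =ᶠ[atTop] fun n => coeff (n - 1) H := by
    filter_upwards [eventually_ge_atTop 1] with n hn
    obtain ⟨m, rfl⟩ := Nat.exists_eq_add_of_le' hn
    rw [coeff_succ_X_mul, Nat.add_sub_cancel]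
  refine ((h.comp_tendsto (tendsto_sub_atTop_nat 1)).trans_isBigO ?_).congr' hshift.symm
    EventuallyEq.rfl
  refine IsBigO.of_bound 1 (Eventually.of_forall fun n => ?_)
  simp only [Function.comp_apply, one_mul, norm_pow, Real.norm_natCast]
  gcongr
  exact_mod_cast Nat.sub_le n 1

/-- `F` behaves like `c / (1 - X) ^ (e + 1)`: `[xⁿ] F = c · (n + e choose e) + o(nᵉ)`. -/
def HasDominantPole (e : ℕ) (c : ℝ) (F : ℝ⟦X⟧) : Prop :=
  (fun n => coeff n (F - C c * (invOneSubPow ℝ (e + 1) : ℝ⟦X⟧))) =o[atTop] fun n => (n : ℝ) ^ e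

lemma hasDominantPole_C_mul_invOneSubPow (e : ℕ) (c : ℝ) :
    HasDominantPole e c (C c * (invOneSubPow ℝ (e + 1) : ℝ⟦X⟧)) := by
  simp [HasDominantPole]

lemma hasDominantPole_inv_one_sub_X : HasDominantPole 0 1 (1 - X)⁻¹ := by
  simpa [inv_one_sub_X] using hasDominantPole_C_mul_invOneSubPow 0 1

namespace HasDominantPole

variable {e p q : ℕ} {c c' : ℝ} {F G : ℝ⟦X⟧}

lemma isBigO_coeff (h : HasDominantPole e c F) :
    (fun n => coeff n F) =O[atTop] fun n => (n : ℝ) ^ e := by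
  simpa [coeff_C_mul] using
    (IsLittleO.isBigO h).add ((isBigO_coeff_invOneSubPow e).const_mul_left c)

lemma add_isLittleO {H : ℝ⟦X⟧} (h : HasDominantPole e c F)
    (hH : (fun n => coeff n H) =o[atTop] fun n => (n : ℝ) ^ e) :
    HasDominantPole e c (F + H) := by
  rw [HasDominantPole, add_sub_right_comm]
  simpa only [map_add] using IsLittleO.add h hH

lemma one_add (h : HasDominantPole e c F) : HasDominantPole e c (1 + F) := by
  simpa only [add_comm] using h.add_isLittleO (isLittleO_coeff_one e)

lemma sub (hF : HasDominantPole e c F) (hG : HasDominantPole e c' G) :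
    HasDominantPole e (c - c') (F - G) := by
  rw [HasDominantPole, show F - G - C (c - c') * (invOneSubPow ℝ (e + 1) : ℝ⟦X⟧) =
    (F - C c * (invOneSubPow ℝ (e + 1) : ℝ⟦X⟧)) - (G - C c' * (invOneSubPow ℝ (e + 1) : ℝ⟦X⟧)) by
    rw [map_sub]; ring]
  simpa only [map_sub] using IsLittleO.sub hF hG

lemma C_mul (a : ℝ) (h : HasDominantPole e c F) : HasDominantPole e (a * c) (C a * F) := by
  rw [HasDominantPole, show C a * F - C (a * c) * (invOneSubPow ℝ (e + 1) : ℝ⟦X⟧) =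
    C a * (F - C c * (invOneSubPow ℝ (e + 1) : ℝ⟦X⟧)) by rw [map_mul]; ring]
  simpa only [coeff_C_mul] using IsLittleO.const_mul_left h a

lemma X_mul (h : HasDominantPole e c F) : HasDominantPole e c (X * F) := by
  have hM := one_sub_X_mul_invOneSubPow_succ e
  rw [HasDominantPole, show X * F - C c * (invOneSubPow ℝ (e + 1) : ℝ⟦X⟧) =
      X * (F - C c * (invOneSubPow ℝ (e + 1) : ℝ⟦X⟧)) - C c * (invOneSubPow ℝ e : ℝ⟦X⟧) by
    rw [← hM]; ring]
  simpa only [map_sub, coeff_C_mul] using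
    (isLittleO_coeff_X_mul h).sub ((isLittleO_coeff_invOneSubPow e).const_mul_left c)

lemma mul (hF : HasDominantPole p c F) (hG : HasDominantPole q c' G) :
    HasDominantPole (p + q + 1) (c * c') (F * G) := by
  have hM : (invOneSubPow ℝ (p + 1) : ℝ⟦X⟧) * (invOneSubPow ℝ (q + 1) : ℝ⟦X⟧) =
      invOneSubPow ℝ (p + q + 1 + 1) := by
    rw [← Units.val_mul, ← invOneSubPow_add, show p + 1 + (q + 1) = p + q + 1 + 1 by omega]
  have h₁ := isLittleO_coeff_mul hF.isBigO_coeff (G := G - _) hG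
  have h₂ := isLittleO_coeff_mul (hasDominantPole_C_mul_invOneSubPow q c').isBigO_coeff
    (G := F - _) hF
  rw [show q + p = p + q by omega] at h₂
  rw [HasDominantPole, ← hM, show F * G - C (c * c') * ((invOneSubPow ℝ (p + 1) : ℝ⟦X⟧) *
      invOneSubPow ℝ (q + 1)) = F * (G - C c' * (invOneSubPow ℝ (q + 1) : ℝ⟦X⟧)) +
      C c' * (invOneSubPow ℝ (q + 1) : ℝ⟦X⟧) * (F - C c * (invOneSubPow ℝ (p + 1) : ℝ⟦X⟧)) by
    rw [map_mul]; ring]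
  simpa only [map_add] using h₁.add h₂

lemma inv_one_sub_C_mul_X_mul {r : ℝ} (hr : |r| < 1) (h : HasDominantPole e c F) :
    HasDominantPole e (c / (1 - r)) ((1 - C r * X)⁻¹ * F) := by
  have hr₁ : 1 - r ≠ 0 := by linarith [le_abs_self r]
  obtain ⟨a, rfl⟩ : ∃ a, c = a * (1 - r) := ⟨c / (1 - r), by field_simp⟩
  rw [mul_div_cancel_right₀ _ hr₁]
  have hu : (1 - C r * X) * (1 - C r * X)⁻¹ = 1 := PowerSeries.mul_inv_cancel _ (by simp)
  have hM := one_sub_X_mul_invOneSubPow_succ e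
  have hsum : Summable fun n => |coeff n (1 - C r * X)⁻¹| := by
    simpa [coeff_inv_one_sub_C_mul_X, abs_pow] using
      summable_geometric_of_lt_one (abs_nonneg r) hr
  rw [HasDominantPole, show (1 - C r * X)⁻¹ * F - C a * (invOneSubPow ℝ (e + 1) : ℝ⟦X⟧) =
    (1 - C r * X)⁻¹ * ((F - C (a * (1 - r)) * (invOneSubPow ℝ (e + 1) : ℝ⟦X⟧)) -
      C (a * r) * (invOneSubPow ℝ e : ℝ⟦X⟧)) by
    rw [← hM, map_mul, map_mul, map_sub, map_one]
    linear_combination (C a * (invOneSubPow ℝ (e + 1) : ℝ⟦X⟧)) * hu]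
  exact isLittleO_coeff_mul_of_summable hsum <| by
    simpa only [map_sub, coeff_C_mul] using
      IsLittleO.sub h ((isLittleO_coeff_invOneSubPow e).const_mul_left _)

lemma tendsto_coeff_div (h : HasDominantPole e c F) (hc : c ≠ 0) :
    Tendsto (fun n => coeff n F / (c * ((n : ℝ) ^ e / e.factorial))) atTop (𝓝 1) := by
  have hc' : c / e.factorial ≠ 0 := div_ne_zero hc (by positivity)
  have hpole : (fun n => c * coeff n (invOneSubPow ℝ (e + 1) : ℝ⟦X⟧)) ~[atTop]
      fun n => c * ((n : ℝ) ^ e / e.factorial) :=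
    (IsEquivalent.refl (u := fun _ => c)).mul (isEquivalent_coeff_invOneSubPow e)
  have hrem : (fun n => coeff n (F - C c * (invOneSubPow ℝ (e + 1) : ℝ⟦X⟧))) =o[atTop]
      fun n => c * ((n : ℝ) ^ e / e.factorial) :=
    h.trans_isBigO <| (isBigO_self_const_mul hc' _ _).congr_right fun n => by ring
  refine (isEquivalent_iff_tendsto_one ?_).1 <| (hpole.add_isLittleO hrem).congr_left <|
    Eventually.of_forall fun n => by simp [coeff_C_mul]
  filter_upwards [eventually_ne_atTop 0] with n hn
  positivity

end HasDominantPole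

/-- One level `g ↦ (1/(1-ix))·(1 + (d-i)x(1-x)·g²)` of the nested formula after the substitution
`x ↦ x/d`, with `s = (d-i)/d` and `δ = 1/d`; `i = 0` gives `f_d`. -/
noncomputable def boundaryStep (δ s : ℝ) (G : ℝ⟦X⟧) : ℝ⟦X⟧ :=
  (1 - C (1 - s) * X)⁻¹ * (1 + C s * X * (1 - C δ * X) * G ^ 2)

lemma hasDominantPole_boundaryStep {e : ℕ} {c δ s : ℝ} {G : ℝ⟦X⟧} (hs : |1 - s| < 1)
    (h : HasDominantPole e c G) :
    HasDominantPole (2 * e + 1) ((1 - δ) * c ^ 2) (boundaryStep δ s G) := by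
  have hs₀ : s ≠ 0 := by rintro rfl; simp at hs
  have hG2 := h.mul h
  have hstep := (((hG2.sub (hG2.X_mul.C_mul δ)).X_mul.C_mul s).one_add).inv_one_sub_C_mul_X_mul hs
  convert hstep using 1
  · ring
  · rw [sub_sub_cancel]; field_simp
  · simp only [boundaryStep]; ring

lemma hasDominantPole_boundaryStep_pow {k : ℕ} {δ s : ℝ} {G : ℝ⟦X⟧} (hs : |1 - s| < 1)
    (h : HasDominantPole (2 ^ k - 1) ((1 - δ) ^ (2 ^ k - 1)) G) :
    HasDominantPole (2 ^ (k + 1) - 1) ((1 - δ) ^ (2 ^ (k + 1) - 1)) (boundaryStep δ s G) := by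
  have hexp : 2 ^ (k + 1) - 1 = 2 * (2 ^ k - 1) + 1 := by
    have := Nat.one_le_two_pow (n := k); rw [pow_succ]; omega
  rw [hexp]
  convert hasDominantPole_boundaryStep hs h using 2
  ring

lemma rescale_boundaryAux_zero {d : ℕ} (hd : (d : ℝ) ≠ 0) :
    rescale (d : ℝ)⁻¹ (boundaryAux d 0) = (1 - X)⁻¹ := by
  rw [boundaryAux, rescale_inv, map_sub, map_one, map_mul, map_natCast, rescale_X,
    ← map_natCast C, ← mul_assoc, ← map_mul, mul_inv_cancel₀ hd, map_one, one_mul]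

lemma rescale_boundaryAux_succ {d k : ℕ} (hk : k + 1 ≤ d) :
    rescale (d : ℝ)⁻¹ (boundaryAux d (k + 1)) =
      boundaryStep (d : ℝ)⁻¹ ((k + 1) / d) (rescale (d : ℝ)⁻¹ (boundaryAux d k)) := by
  have hd : (d : ℝ) ≠ 0 := Nat.cast_ne_zero.2 (by omega)
  have h₁ : ((d - (k + 1) : ℕ) : ℝ⟦X⟧) * C (d : ℝ)⁻¹ = C (1 - ((k : ℝ) + 1) / d) := by
    rw [← map_natCast C, ← map_mul, Nat.cast_sub hk]; congr 1; push_cast; field_simp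
  have h₂ : ((k + 1 : ℕ) : ℝ⟦X⟧) * C (d : ℝ)⁻¹ = C (((k : ℝ) + 1) / d) := by
    rw [← map_natCast C, ← map_mul]; congr 1; push_cast; field_simp
  rw [boundaryStep, ← h₁, ← h₂, boundaryAux]
  simp only [rescale_inv, map_mul, map_sub, map_add, map_one, map_pow, map_natCast, rescale_X,
    mul_assoc]

lemma rescale_boundaryGF {d : ℕ} (hd : (d : ℝ) ≠ 0) :
    rescale (d : ℝ)⁻¹ (boundaryGF d) =
      boundaryStep (d : ℝ)⁻¹ 1 (rescale (d : ℝ)⁻¹ (boundaryAux d (d - 1))) := by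
  have h : (d : ℝ⟦X⟧) * C (d : ℝ)⁻¹ = C 1 := by
    rw [← map_natCast C, ← map_mul, mul_inv_cancel₀ hd]
  rw [boundaryStep, boundaryGF, ← h, sub_self, map_zero, zero_mul, sub_zero, inv_one, one_mul]
  simp only [map_mul, map_sub, map_add, map_one, map_pow, map_natCast, rescale_X, mul_assoc]

lemma hasDominantPole_rescale_boundaryAux {d : ℕ} (hd : 0 < d) :
    ∀ k, k ≤ d - 1 → HasDominantPole (2 ^ k - 1) ((1 - (d : ℝ)⁻¹) ^ (2 ^ k - 1))
      (rescale (d : ℝ)⁻¹ (boundaryAux d k))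
  | 0, _ => by
    simpa [rescale_boundaryAux_zero (Nat.cast_ne_zero.2 hd.ne')] using
      hasDominantPole_inv_one_sub_X
  | k + 1, hk => by
    have hs₀ : 0 < ((k : ℝ) + 1) / d := by positivity
    have hs₁ : ((k : ℝ) + 1) / d ≤ 1 := div_le_one_of_le₀ (by norm_cast; omega) (by positivity)
    rw [rescale_boundaryAux_succ (by omega)]
    exact hasDominantPole_boundaryStep_pow (abs_lt.2 ⟨by linarith, by linarith⟩)
      (hasDominantPole_rescale_boundaryAux hd k (by omega))

/-- Asymptotics of the number of boundary guillotine partitions of a d-box: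
`[xⁿ] f_d ∼ ((d−1)/d)^(2^d−1) · n^(2^d−1)/(2^d−1)! · dⁿ`. -/
theorem boundary_asymptotics (d : ℕ) (hd : 2 ≤ d) :
    Filter.Tendsto
      (fun n : ℕ => coeff n (boundaryGF d) /
        ((((d : ℝ) - 1) / d) ^ (2 ^ d - 1) *
          ((n : ℝ) ^ (2 ^ d - 1) / (Nat.factorial (2 ^ d - 1))) * (d : ℝ) ^ n))
      Filter.atTop (nhds 1) := by
  have hd₀ : (d : ℝ) ≠ 0 := by positivity
  have hν : ((d : ℝ) - 1) / d = 1 - (d : ℝ)⁻¹ := by field_simp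
  have hν₀ : ((d : ℝ) - 1) / d ≠ 0 :=
    div_ne_zero (sub_ne_zero.2 (by exact_mod_cast (by omega : d ≠ 1))) hd₀
  have hpole := hasDominantPole_boundaryStep_pow (k := d - 1) (δ := (d : ℝ)⁻¹) (s := 1)
    (by simp) (hasDominantPole_rescale_boundaryAux (by omega) (d - 1) le_rfl)
  rw [← rescale_boundaryGF hd₀, Nat.sub_add_cancel (by omega), ← hν] at hpole
  refine (hpole.tendsto_coeff_div (pow_ne_zero _ hν₀)).congr fun n => ?_
  rw [coeff_rescale, inv_pow]
  field_simp
end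

section
/- Let g be the formal power series with g(0)=1 satisfying g = 1 + (d−1)·x·g²·(1 − x^(m−1) g^(m−1))/(1 − x g), for fixed integers d ≥ 2 and m ≥ 2. Setting f = 1 + d(g−1)/(d−1) (so g = 1 + ((d−1)/d)(f−1)), f satisfies f = ∑_{j=0}^{m−1} x^j·(1 + ((d−1)/d)(f−1))^(j+1). -/
open PowerSeries in
/-- Let `g(0)=1` satisfy `g = 1 + (d−1) x g² (1 − x^(m−1) g^(m−1))/(1 − x g)`,
and let `f = 1 + d(g−1)/(d−1)` (so that `g = 1 + ((d−1)/d)(f−1)`). Then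
`f = ∑_{j=0}^{m−1} x^j (1 + ((d−1)/d)(f−1))^(j+1)`. -/
theorem alternating_gf (d m : ℕ) (hd : 2 ≤ d) (hm : 2 ≤ m)
    (g f : PowerSeries ℚ) (hg0 : constantCoeff g = 1)
    (hg : g = 1 + C ((d : ℚ) - 1) * X * g ^ 2 *
      (1 - X ^ (m - 1) * g ^ (m - 1)) * (1 - X * g)⁻¹)
    (hf : f = 1 + C ((d : ℚ) / ((d : ℚ) - 1)) * (g - 1)) :
    f = ∑ j ∈ Finset.range m,
      X ^ j * (1 + C (((d : ℚ) - 1) / d) * (f - 1)) ^ (j + 1) := by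
  obtain ⟨n, rfl⟩ : ∃ n, m = n + 1 := ⟨m - 1, by omega⟩
  have hd2 : (2 : ℚ) ≤ (d : ℚ) := by exact_mod_cast hd
  have hd0 : (d : ℚ) ≠ 0 := by linarith
  have hd1 : (d : ℚ) - 1 ≠ 0 := by linarith
  simp only [Nat.add_sub_cancel] at hg
  -- (1 - X g) is a unit
  have hc : constantCoeff (1 - X * g) = 1 := by simp
  have hc0 : constantCoeff (1 - X * g) ≠ 0 := by rw [hc]; norm_num
  have hu : (1 - X * g) * (1 - X * g)⁻¹ = 1 :=
    PowerSeries.mul_inv_cancel _ hc0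
  have hXg : (1 - X * g) ≠ 0 := fun h => hc0 (by rw [h]; simp)
  -- the inner series equals g
  have hfg : (1 : PowerSeries ℚ) + C (((d : ℚ) - 1) / d) * (f - 1) = g := by
    rw [hf, add_sub_cancel_left, ← mul_assoc, ← map_mul]
    have : ((d : ℚ) - 1) / d * ((d : ℚ) / ((d : ℚ) - 1)) = 1 := by field_simp
    rw [this, map_one, one_mul, add_sub_cancel]
  rw [hfg]
  set E : PowerSeries ℚ := C ((d : ℚ) - 1) * X * g ^ 2 * (1 - X ^ n * g ^ n) with hE
  -- g (1 - Xg) = (1 - Xg) + E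
  have h2 : g * (1 - X * g) = (1 - X * g) + E := by
    calc g * (1 - X * g) = (1 + E * (1 - X * g)⁻¹) * (1 - X * g) := by rw [← hg]
    _ = (1 - X * g) + E * ((1 - X * g) * (1 - X * g)⁻¹) := by ring
    _ = (1 - X * g) + E := by rw [hu, mul_one]
  -- f (1 - Xg) = (1 - Xg) + C(d/(d-1)) E
  have h3 : f * (1 - X * g) = (1 - X * g) + C ((d : ℚ) / ((d : ℚ) - 1)) * E := by
    have hg1 : g - 1 = E * (1 - X * g)⁻¹ := by
      linear_combination hg
    calc f * (1 - X * g)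
        = (1 + C ((d : ℚ) / ((d : ℚ) - 1)) * (E * (1 - X * g)⁻¹)) * (1 - X * g) := by
          rw [hf, hg1]
      _ = (1 - X * g) + C ((d : ℚ) / ((d : ℚ) - 1)) * E *
            ((1 - X * g) * (1 - X * g)⁻¹) := by ring
      _ = _ := by rw [hu, mul_one]
  apply mul_right_cancel₀ hXg
  rw [h3]
  have hgeom : (∑ j ∈ Finset.range (n + 1), X ^ j * g ^ (j + 1)) * (1 - X * g)
      = g * (1 - (X * g) ^ (n + 1)) := by
    have hs : (∑ j ∈ Finset.range (n + 1), X ^ j * g ^ (j + 1))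
        = (∑ j ∈ Finset.range (n + 1), (X * g) ^ j) * g := by
      rw [Finset.sum_mul]
      exact Finset.sum_congr rfl fun j _ => by rw [mul_pow]; ring
    rw [hs]
    linear_combination (-g) * geom_sum_mul (X * g : PowerSeries ℚ) (n + 1)
  rw [hgeom]
  -- final ring identity
  have hC : C ((d : ℚ) / ((d : ℚ) - 1)) * C ((d : ℚ) - 1) = C ((d : ℚ) - 1) + 1 := by
    rw [← map_mul, div_mul_cancel₀ _ hd1, ← map_one C, ← map_add]
    congr 1
    ring
  have expand : C ((d : ℚ) / ((d : ℚ) - 1)) * E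
      = (C ((d : ℚ) - 1) + 1) * (X * g ^ 2 * (1 - X ^ n * g ^ n)) := by
    rw [hE, ← hC]; ring
  rw [expand]
  rw [mul_pow]
  linear_combination -h2
end
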